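/- arXiv:quant-ph/0109101 — 5 statements merged into one kernel-verified Lean document; each statement's English description precedes it below -/
import Mathlib

section
/- For N = 2m even with m ≥ 1, the 2-adic valuation of the number of binary strings of length N having strictly more ones than zeros equals w(N) - 1, where w(N) is the Hamming weight of N. -/
/-!
Complementing every bit exchanges the strings with more ones and those with more zeros, so the
count `A` satisfies `2 * A + (2m choose m) = 2 ^ (2m)`. By Kummer's theorem the 2-adic valuation
of `2m choose m` is `w(m) = w(2m)`, which is at most `m < 2m`; hence `2 * A` has the same valuation
as `2m choose m` by the ultrametric inequality.
-/

open Finset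

lemma two_mul_card_filter_lt_add_card_filter_eq {β : Type*} [Fintype β] {f g : β → ℕ}
    (hswap : #{x | f x < g x} = #{x | g x < f x}) :
    2 * #{x | f x < g x} + #{x | f x = g x} = Fintype.card β := by
  classical
  have hne : #{x | f x ≠ g x} = #{x | f x < g x} + #{x | g x < f x} := by
    rw [← card_union_of_disjoint (disjoint_filter.2 fun _ _ h => h.asymm), ← filter_or]
    simp only [ne_iff_lt_or_gt]
  rw [← card_univ, ← card_filter_add_card_filter_not (s := univ) (fun x => f x = g x), hne, hswap]
  ring

section BoolFun

variable {α : Type*} [Fintype α]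

lemma card_filter_false_add_card_filter_true (X : α → Bool) :
    #{i | X i = false} + #{i | X i = true} = Fintype.card α := by
  simpa using card_filter_add_card_filter_not (s := univ) (fun i => X i = false)

variable [DecidableEq α]

lemma card_boolFun_filter_card_true_eq (k : ℕ) :
    #{X : α → Bool | #{i | X i = true} = k} = (Fintype.card α).choose k := by
  rw [← card_univ, ← card_powersetCard]
  refine card_nbij' (fun X => ({i | X i = true} : Finset α)) (fun s i => decide (i ∈ s))
    ?_ ?_ ?_ ?_
  · intro X hX
    simpa [mem_powersetCard] using hX
  · intro s hs
    simpa [mem_powersetCard] using hs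
  · intro X _
    funext i
    simp
  · intro s _
    ext i
    simp

lemma card_boolFun_filter_card_false_eq_card_true {m : ℕ} (hα : Fintype.card α = 2 * m) :
    #{X : α → Bool | #{i | X i = false} = #{i | X i = true}} = (2 * m).choose m := by
  rw [← hα, ← card_boolFun_filter_card_true_eq]
  congr 1
  ext X
  have := card_filter_false_add_card_filter_true X
  simp only [mem_filter, mem_univ, true_and]
  omega

lemma two_mul_card_boolFun_filter_false_lt_true_add :
    2 * #{X : α → Bool | #{i | X i = false} < #{i | X i = true}} +
      #{X : α → Bool | #{i | X i = false} = #{i | X i = true}} = 2 ^ Fintype.card α := by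
  rw [two_mul_card_filter_lt_add_card_filter_eq, Fintype.card_fun, Fintype.card_bool]
  refine card_nbij' (fun X i => !X i) (fun X i => !X i) ?_ ?_ ?_ ?_ <;>
    simp [Set.MapsTo, Set.LeftInvOn]

end BoolFun

lemma padicValNat_eq_of_add_eq_prime_pow {p a c N : ℕ} [Fact p.Prime] (h : a + c = p ^ N)
    (hc : c ≠ 0) (hcN : padicValNat p c < N) : padicValNat p a = padicValNat p c := by
  have ha : a ≠ 0 := by
    rintro rfl
    rw [zero_add] at h
    rw [h, padicValNat.prime_pow] at hcN
    exact lt_irrefl _ hcN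
  have hac : (a : ℚ) = -c + (p : ℚ) ^ N := by
    rw [neg_add_eq_sub, eq_sub_iff_add_eq]; exact_mod_cast h
  suffices padicValRat p a = padicValRat p c by simpa [padicValRat.of_nat] using this
  rw [hac, padicValRat.add_eq_of_lt (hac ▸ Nat.cast_ne_zero.2 ha) (by simpa using hc)
    (pow_ne_zero _ (by exact_mod_cast (Fact.out : p.Prime).ne_zero))]
  · simp
  · simpa [padicValRat.of_nat] using hcN

lemma padicValNat_two_choose_two_mul_self (m : ℕ) :
    padicValNat 2 ((2 * m).choose m) = (Nat.digits 2 m).sum := by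
  rcases Nat.eq_zero_or_pos m with rfl | hm
  · simp
  have h := sub_one_mul_padicValNat_choose_eq_sub_sum_digits' (p := 2) (k := m) (n := m)
  rw [← two_mul, Nat.digits_base_mul one_lt_two hm] at h
  simpa using h

/-- For N = 2m with m ≥ 1, the 2-adic valuation of the number of binary strings
of length N with strictly more ones than zeros equals w(N) - 1. -/
theorem stmt_4 (m : ℕ) (hm : 1 ≤ m) :
    padicValNat 2
        (Finset.univ.filter fun X : Fin (2 * m) → Bool =>
          (Finset.univ.filter fun i => X i = false).card <
            (Finset.univ.filter fun i => X i = true).card).card =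
      (Nat.digits 2 (2 * m)).sum - 1 := by
  set A := #{X : Fin (2 * m) → Bool | #{i | X i = false} < #{i | X i = true}}
  have hcount : 2 * A + (2 * m).choose m = 2 ^ (2 * m) := by
    simpa [card_boolFun_filter_card_false_eq_card_true (Fintype.card_fin (2 * m))] using
      two_mul_card_boolFun_filter_false_lt_true_add (α := Fin (2 * m))
  have hA : A ≠ 0 := (card_pos.2 ⟨fun _ => true, by simpa using Nat.lt_of_succ_le hm⟩).ne'
  have hval := padicValNat_eq_of_add_eq_prime_pow hcount (Nat.choose_pos (by omega)).ne' <| by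
    rw [padicValNat_two_choose_two_mul_self]
    exact (Nat.digit_sum_le 2 m).trans_lt (by omega)
  rw [padicValNat.mul two_ne_zero hA, padicValNat_self, padicValNat_two_choose_two_mul_self]
    at hval
  rw [Nat.digits_base_mul one_lt_two hm, List.sum_cons, zero_add]
  omega
end

section
/- There exists an XOR decision tree computing MAJORITY on N-bit inputs (for N ≥ 1) with cost at most N + 1 - w(N), where cost is the maximum number of queries over all inputs and each query is either an input bit or the XOR of two input bits. -/
/-!
Oblivious pairing keeps a multiset of homogeneous blocks whose signed sizes add up to
#ones − #zeros. In each phase the blocks, all of size `2^(k-1)`, are compared in pairs by one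
XOR query: equal blocks merge into a block of size `2^k`, opposite ones cancel. At most one
block per phase stays unpaired, and since these leftovers have distinct powers of two as sizes,
the largest one outweighs all the others, so a single bit of it decides the majority.
A phase on `m` blocks spends `⌊m/2⌋` queries and leaves `⌊m/2⌋` blocks, which gives
`⌊N/2⌋ + ⌊N/4⌋ + ⋯ = N - w(N)` XOR queries in total.
-/

/-- A decision tree that may query a single input bit or the XOR of two
input bits, each at unit cost. -/
inductive XorTree (N : ℕ) where
  | leaf (b : Bool)
  | bit (i : Fin N) (t0 t1 : XorTree N)
  | xorq (i j : Fin N) (t0 t1 : XorTree N)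

/-- Evaluation of an XOR decision tree on an input. -/
def XorTree.eval {N : ℕ} : XorTree N → (Fin N → Bool) → Bool
  | .leaf b, _ => b
  | .bit i t0 t1, X => if X i then t1.eval X else t0.eval X
  | .xorq i j t0 t1, X => if xor (X i) (X j) then t1.eval X else t0.eval X

/-- Cost (worst-case number of queries = depth) of an XOR decision tree. -/
def XorTree.cost {N : ℕ} : XorTree N → ℕ
  | .leaf _ => 0
  | .bit _ t0 t1 => 1 + max t0.cost t1.cost
  | .xorq _ _ t0 t1 => 1 + max t0.cost t1.cost

/-- The number of XOR queries the pairing algorithm spends on `n` blocks of equal size: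
`⌊n/2⌋ + ⌊n/4⌋ + ⋯ = n - w(n)`. -/
def pairingCost (n : ℕ) : ℕ := n - (Nat.digits 2 n).sum

lemma digits_two_sum (n : ℕ) : (Nat.digits 2 n).sum = n % 2 + (Nat.digits 2 (n / 2)).sum := by
  rcases Nat.eq_zero_or_pos n with rfl | hn
  · simp
  · simp [Nat.digits_def' one_lt_two hn]

lemma pairingCost_eq (n : ℕ) : pairingCost n = n / 2 + pairingCost (n / 2) := by
  have := Nat.digit_sum_le 2 (n / 2)
  have := digits_two_sum n
  unfold pairingCost
  omega

lemma pairingCost_mono : Monotone pairingCost := by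
  refine monotone_nat_of_le_succ fun n => ?_
  induction n using Nat.strong_induction_on with
  | _ n ih =>
    rw [pairingCost_eq n, pairingCost_eq (n + 1)]
    rcases Nat.even_or_odd n with ⟨k, rfl⟩ | ⟨k, rfl⟩
    · rw [show (k + k + 1) / 2 = (k + k) / 2 by omega]
    · have := ih k (by omega)
      rw [show (2 * k + 1) / 2 = k by omega, show (2 * k + 1 + 1) / 2 = k + 1 by omega]
      omega

/-- A block `(i, m)` stands for `m` input bits that are all equal to bit `i`; only its signed
contribution to (#ones − #zeros) is ever used. -/
abbrev Block (N : ℕ) := Fin N × ℕ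

namespace Block

variable {N : ℕ} (X : Fin N → Bool)

def value (B : Block N) : ℤ := if X B.1 then (B.2 : ℤ) else -(B.2 : ℤ)

def signedSum (L : List (Block N)) : ℤ := (L.map (value X)).sum

def size (L : List (Block N)) : ℕ := (L.map Prod.snd).sum

@[simp] lemma signedSum_nil : signedSum X [] = 0 := rfl

@[simp] lemma signedSum_cons (B : Block N) (L : List (Block N)) :
    signedSum X (B :: L) = value X B + signedSum X L := by
  simp [signedSum]

@[simp] lemma signedSum_append (L L' : List (Block N)) :
    signedSum X (L ++ L') = signedSum X L + signedSum X L' := by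
  simp [signedSum]

@[simp] lemma size_cons (B : Block N) (L : List (Block N)) : size (B :: L) = B.2 + size L := by
  simp [size]

lemma abs_value (B : Block N) : |value X B| = B.2 := by
  unfold value; split_ifs <;> simp

lemma abs_signedSum_le (L : List (Block N)) : |signedSum X L| ≤ size L := by
  induction L with
  | nil => simp [size]
  | cons B L ih =>
    rw [signedSum_cons, size_cons, Nat.cast_add, ← abs_value X B]
    exact (abs_add_le _ _).trans (by linarith)

lemma value_merge {A B : Block N} (h : X B.1 = X A.1) :
    value X (A.1, A.2 + B.2) = value X A + value X B := by
  unfold value; rw [h]; split_ifs <;> push_cast <;> ring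

lemma value_add_value_eq_zero {A B : Block N} (h : X B.1 ≠ X A.1) (hs : A.2 = B.2) :
    value X A + value X B = 0 := by
  unfold value; rw [hs]
  cases hA : X A.1 <;> cases hB : X B.1 <;> simp_all

def HeadDominates : List (Block N) → Prop
  | [] => True
  | A :: L => size L < A.2

lemma signedSum_cons_nonneg_iff {A : Block N} {L : List (Block N)} (h : size L < A.2) :
    (0 ≤ signedSum X (A :: L)) ↔ X A.1 = true := by
  have := abs_le.mp (abs_signedSum_le X L)
  rw [signedSum_cons, value]
  cases X A.1 <;> simp <;> omega

end Block

open Block Finset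

section

variable {N : ℕ}

/-- Query one bit of the dominant block; with no blocks left the input is balanced. -/
def queryHead : List (Block N) → XorTree N
  | [] => .leaf true
  | A :: _ => .bit A.1 (.leaf false) (.leaf true)

/-- The oblivious-pairing algorithm. `cur` holds the blocks of the current phase, `nxt` the
merged blocks of the next phase, and `left` the unpaired blocks of earlier phases, largest
first. -/
def pairingTree : List (Block N) → List (Block N) → List (Block N) → XorTree N
  | [], [], left => queryHead left
  | [], B :: nxt, left => pairingTree (B :: nxt) [] left
  | [A], nxt, left => pairingTree nxt [] (A :: left)
  | A :: B :: cur, nxt, left =>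
      .xorq A.1 B.1 (pairingTree cur ((A.1, A.2 + B.2) :: nxt) left) (pairingTree cur nxt left)
  termination_by cur nxt _ => 2 * (cur.length + nxt.length) + min nxt.length 1
  decreasing_by all_goals (simp; try omega)

theorem cost_pairingTree (cur nxt left : List (Block N)) :
    (pairingTree cur nxt left).cost ≤
      cur.length / 2 + pairingCost (nxt.length + cur.length / 2) + 1 := by
  induction cur, nxt, left using pairingTree.induct with
  | case1 left =>
    rw [pairingTree]
    cases left <;> simp [queryHead, XorTree.cost]
  | case2 B nxt left ih =>
    rw [pairingTree]
    simp only [List.length_cons, List.length_nil, Nat.zero_div, add_zero, zero_add] at ih ⊢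
    have := pairingCost_eq (nxt.length + 1)
    omega
  | case3 A nxt left ih =>
    rw [pairingTree]
    simp only [List.length_singleton, List.length_nil, Nat.reduceDiv,
      add_zero, zero_add] at ih ⊢
    have := pairingCost_eq nxt.length
    omega
  | case4 A B cur nxt left ih₀ ih₁ =>
    rw [pairingTree]
    simp only [XorTree.cost, List.length_cons] at ih₀ ih₁ ⊢
    have := pairingCost_mono (Nat.le_add_right (nxt.length + cur.length / 2) 1)
    rw [show (cur.length + 1 + 1) / 2 = cur.length / 2 + 1 by omega, ← add_assoc]
    rw [show nxt.length + 1 + cur.length / 2 = nxt.length + cur.length / 2 + 1 by omega] at ih₀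
    omega

lemma eval_queryHead (X : Fin N → Bool) {left : List (Block N)} (h : HeadDominates left) :
    (queryHead left).eval X = decide (0 ≤ signedSum X left) := by
  cases left with
  | nil => simp [queryHead, XorTree.eval]
  | cons A L =>
    have := signedSum_cons_nonneg_iff X h
    cases hX : X A.1 <;> simp_all [queryHead, XorTree.eval]

theorem eval_pairingTree (X : Fin N → Bool) (cur nxt left : List (Block N)) (s : ℕ)
    (hcur : ∀ B ∈ cur, B.2 = s) (hnxt : ∀ B ∈ nxt, B.2 = 2 * s) (hleft : size left < s)
    (hdom : HeadDominates left) :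
    (pairingTree cur nxt left).eval X = decide (0 ≤ signedSum X (cur ++ nxt ++ left)) := by
  induction cur, nxt, left using pairingTree.induct generalizing s with
  | case1 left => rw [pairingTree]; simpa using eval_queryHead X hdom
  | case2 B nxt left ih =>
    rw [pairingTree]
    simpa using ih (2 * s) hnxt (by simp) (by omega) hdom
  | case3 A nxt left ih =>
    have hA : A.2 = s := hcur A (by simp)
    rw [pairingTree, ih (2 * s) hnxt (by simp) (by simp; omega) (by simp [HeadDominates]; omega)]
    simp only [signedSum_append, signedSum_cons, signedSum_nil]
    congr 2; ring
  | case4 A B cur nxt left ih₀ ih₁ =>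
    have hA : A.2 = s := hcur A (by simp)
    have hB : B.2 = s := hcur B (by simp)
    have hcur' : ∀ C ∈ cur, C.2 = s := fun C hC => hcur C (by simp [hC])
    rw [pairingTree, XorTree.eval]
    by_cases hAB : X B.1 = X A.1
    · have hnxt' : ∀ C ∈ (A.1, A.2 + B.2) :: nxt, C.2 = 2 * s := by
        rintro C (_ | ⟨_, hC⟩)
        · simp [hA, hB, two_mul]
        · exact hnxt C hC
      rw [if_neg fun h => Bool.xor_iff_ne.mp h hAB.symm, ih₀ s hcur' hnxt' hleft hdom]
      simp only [signedSum_append, signedSum_cons, value_merge X hAB]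
      congr 2; ring
    · rw [if_pos (Bool.xor_iff_ne.mpr (Ne.symm hAB)), ih₁ s hcur' hnxt hleft hdom]
      simp only [signedSum_append, signedSum_cons, ← add_assoc,
        value_add_value_eq_zero X hAB (hA.trans hB.symm), zero_add]

lemma signedSum_singletons (X : Fin N → Bool) :
    signedSum X ((List.finRange N).map fun i => (i, 1)) =
      (#{i | X i = true} : ℤ) - #{i | X i = false} := by
  simp only [signedSum, List.map_map, ← Fin.sum_univ_def]
  simp [value, Finset.sum_ite, sub_eq_add_neg]

end

theorem stmt_9_general (N : ℕ) :
    ∃ T : XorTree N,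
      (∀ X : Fin N → Bool, T.eval X =
        decide ((Finset.univ.filter fun i => X i = false).card ≤
                (Finset.univ.filter fun i => X i = true).card)) ∧
      T.cost ≤ N + 1 - (Nat.digits 2 N).sum := by
  let singletons := (List.finRange N).map fun i => ((i, 1) : Block N)
  refine ⟨pairingTree singletons [] [], fun X => ?_, ?_⟩
  · rw [eval_pairingTree X _ [] [] 1 (by simp [singletons]) (by simp) (by simp [size]) trivial]
    simp [singletons, signedSum_singletons]
  · calc (pairingTree singletons [] []).cost ≤ N / 2 + pairingCost (N / 2) + 1 := by
          simpa [singletons] using cost_pairingTree singletons [] []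
      _ = N + 1 - (Nat.digits 2 N).sum := by
          have := Nat.digit_sum_le 2 N
          rw [← pairingCost_eq N, pairingCost]
          omega

/-- There is an XOR decision tree computing MAJORITY (1 iff at least as many
ones as zeros) on N-bit inputs with cost at most N + 1 - w(N). -/
theorem stmt_9 (N : ℕ) (hN : 1 ≤ N) :
    ∃ T : XorTree N,
      (∀ X : Fin N → Bool, T.eval X =
        decide ((Finset.univ.filter fun i => X i = false).card ≤
                (Finset.univ.filter fun i => X i = true).card)) ∧
      T.cost ≤ N + 1 - (Nat.digits 2 N).sum :=
  stmt_9_general N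
end

section
/- Let t = ⌈N/2⌉. Any randomized decision tree (querying only single input bits) that computes MAJORITY on N bits with two-sided error at most 1/4 must have cost N; equivalently, if such a tree always queries at most N-1 bits, then there is an input distribution on which its error probability exceeds 1/4. Specifically, under the distribution that with probability t/(N+1) picks a uniformly random string with exactly t-1 ones and otherwise picks a uniformly random string with exactly t ones, any algorithm that queries exactly N-1 bits errs with probability at least t(N - t + 1)/(N(N+1)) > 1/4. -/
/-!
Let `a = ⌊(N - 1)/2⌋`. MAJORITY separates the inputs of weight `a` (value 0) from those of
weight `a + 1` (value 1), and there are `C(N, a) + C(N, a + 1) = C(N + 1, a + 1)` of them.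
A deterministic tree that never queries all `N` bits errs on at least `C(N - 1, a)` of them:
inductively, on a subcube with free coordinates `S`, a tree of cost `< #S` errs on at least
`C(#S - 1, a)` of the boundary inputs, and a query of a free coordinate splits the count
according to Pascal's rule. Averaging over the random tree, some input is answered wrongly with
probability at least `C(N - 1, a) / C(N + 1, a + 1) = (a + 1)(N - a) / (N (N + 1)) > 1/4`.
-/

/-- A classical decision tree querying single input bits. -/
inductive DTree (N : ℕ) where
  | leaf (b : Bool)
  | node (i : Fin N) (t0 t1 : DTree N)

/-- Evaluation of a decision tree on an input. -/
def DTree.eval {N : ℕ} : DTree N → (Fin N → Bool) → Bool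
  | .leaf b, _ => b
  | .node i t0 t1, X => if X i then t1.eval X else t0.eval X

/-- Cost (worst-case number of queries = depth) of a decision tree. -/
def DTree.cost {N : ℕ} : DTree N → ℕ
  | .leaf _ => 0
  | .node _ t0 t1 => 1 + max t0.cost t1.cost

open Finset

section Subcube

variable {ι : Type*} [Fintype ι]

def majority (X : ι → Bool) : Bool :=
  decide (#{i | X i = false} ≤ #{i | X i = true})

lemma majority_eq_decide (X : ι → Bool) :
    majority X = decide (Fintype.card ι ≤ 2 * #{i | X i = true}) := by
  have h := card_filter_add_card_filter_not (s := univ) (X · = true)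
  simp only [Bool.not_eq_true, card_univ] at h
  exact decide_eq_decide.2 (by omega)

variable [DecidableEq ι]

def subcubeSlice (S : Finset ι) (σ : ι → Bool) (a : ℕ) : Finset (ι → Bool) :=
  {X | (∀ j ∉ S, X j = σ j) ∧ #{j ∈ S | X j = true} = a}

@[simp]
lemma mem_subcubeSlice {S : Finset ι} {σ X : ι → Bool} {a : ℕ} :
    X ∈ subcubeSlice S σ a ↔ (∀ j ∉ S, X j = σ j) ∧ #{j ∈ S | X j = true} = a := by
  simp [subcubeSlice]

lemma card_subcubeSlice (S : Finset ι) (σ : ι → Bool) (a : ℕ) :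
    #(subcubeSlice S σ a) = (#S).choose a := by
  have filter_fill (A : Finset ι) (hA : A ⊆ S) :
      {j ∈ S | (if j ∈ S then decide (j ∈ A) else σ j) = true} = A := by
    ext j
    by_cases hj : j ∈ S
    · simp [hj]
    · simp [hj, show j ∉ A from fun h => hj (hA h)]
  rw [← card_powersetCard a S]
  refine card_nbij' (fun X => {j ∈ S | X j = true})
    (fun A j => if j ∈ S then decide (j ∈ A) else σ j) ?_ ?_ ?_ ?_
  · intro X hX
    simp_all [mem_powersetCard, filter_subset]
  · intro A hA
    rw [mem_coe, mem_powersetCard] at hA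
    simp_all +contextual
  · intro X hX
    funext j
    by_cases hj : j ∈ S <;> simp_all
  · intro A hA
    rw [mem_coe, mem_powersetCard] at hA
    exact filter_fill A hA.1

lemma subcubeSlice_erase_subset {S : Finset ι} {i : ι} (hi : i ∈ S) (σ : ι → Bool) (b : Bool)
    (w : ℕ) :
    subcubeSlice (S.erase i) (Function.update σ i b) w ⊆ subcubeSlice S σ (w + b.toNat) := by
  intro X hX
  rw [mem_subcubeSlice] at hX ⊢
  obtain ⟨hfix, hw⟩ := hX
  have hXi : X i = b := by simpa using hfix i (notMem_erase i S)
  refine ⟨fun j hj => ?_, ?_⟩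
  · have hji : j ≠ i := fun h => hj (h ▸ hi)
    simpa [hji] using hfix j (fun h => hj (mem_of_mem_erase h))
  · rw [← insert_erase hi, filter_insert, ← hw]
    cases b <;> simp [hXi]

lemma disjoint_subcubeSlice_of_apply_ne {S : Finset ι} {σ τ : ι → Bool} {i : ι} (hi : i ∉ S)
    (h : σ i ≠ τ i) (a b : ℕ) : Disjoint (subcubeSlice S σ a) (subcubeSlice S τ b) :=
  disjoint_left.2 fun _ hσ hτ =>
    h (((mem_subcubeSlice.1 hσ).1 i hi).symm.trans ((mem_subcubeSlice.1 hτ).1 i hi))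

lemma disjoint_subcubeSlice_of_ne (S : Finset ι) (σ : ι → Bool) {a b : ℕ} (h : a ≠ b) :
    Disjoint (subcubeSlice S σ a) (subcubeSlice S σ b) :=
  disjoint_left.2 fun _ ha hb =>
    h ((mem_subcubeSlice.1 ha).2.symm.trans (mem_subcubeSlice.1 hb).2)

end Subcube

namespace DTree

variable {N : ℕ}

lemma eval_node_of_apply_eq {i : Fin N} {X : Fin N → Bool} {b : Bool} (t0 t1 : DTree N)
    (h : X i = b) : (node i t0 t1).eval X = (cond b t1 t0).eval X := by
  cases b <;> simp [eval, h]

-- The errors of `T` on the subcube for the threshold function "more than `a` ones on `S`".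
def boundaryErrors (T : DTree N) (S : Finset (Fin N)) (σ : Fin N → Bool) (a : ℕ) : ℕ :=
  #{X ∈ subcubeSlice S σ a | T.eval X = true} +
    #{X ∈ subcubeSlice S σ (a + 1) | T.eval X = false}

lemma filter_eval_subcubeSlice_erase_subset {S : Finset (Fin N)} {i : Fin N} (hi : i ∈ S)
    (σ : Fin N → Bool) (t0 t1 : DTree N) (b : Bool) (w : ℕ) (v : Bool) :
    {X ∈ subcubeSlice (S.erase i) (Function.update σ i b) w | (cond b t1 t0).eval X = v} ⊆
      {X ∈ subcubeSlice S σ (w + b.toNat) | (node i t0 t1).eval X = v} := by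
  intro X hX
  rw [mem_filter] at hX ⊢
  have hXi : X i = b := by simpa using (mem_subcubeSlice.1 hX.1).1 i (notMem_erase i S)
  exact ⟨subcubeSlice_erase_subset hi σ b w hX.1, (eval_node_of_apply_eq t0 t1 hXi).trans hX.2⟩

lemma card_filter_eval_add_card_filter_eval_le {S : Finset (Fin N)} {i : Fin N} (hi : i ∈ S)
    (σ : Fin N → Bool) (t0 t1 : DTree N) (w : ℕ) (v : Bool) :
    #{X ∈ subcubeSlice (S.erase i) (Function.update σ i false) (w + 1) | t0.eval X = v} +
        #{X ∈ subcubeSlice (S.erase i) (Function.update σ i true) w | t1.eval X = v} ≤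
      #{X ∈ subcubeSlice S σ (w + 1) | (node i t0 t1).eval X = v} := by
  rw [← card_union_of_disjoint]
  · exact card_le_card (union_subset (filter_eval_subcubeSlice_erase_subset hi σ t0 t1 false _ v)
      (filter_eval_subcubeSlice_erase_subset hi σ t0 t1 true _ v))
  · exact disjoint_filter_filter
      (disjoint_subcubeSlice_of_apply_ne (notMem_erase i S) (by simp) _ _)

lemma boundaryErrors_node_of_notMem {S : Finset (Fin N)} {i : Fin N} (hi : i ∉ S)
    (σ : Fin N → Bool) (t0 t1 : DTree N) (a : ℕ) :
    (node i t0 t1).boundaryErrors S σ a = (cond (σ i) t1 t0).boundaryErrors S σ a := by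
  have eval_eq (w : ℕ) (v : Bool) :
      {X ∈ subcubeSlice S σ w | (node i t0 t1).eval X = v} =
        {X ∈ subcubeSlice S σ w | (cond (σ i) t1 t0).eval X = v} :=
    filter_congr fun X hX => by
      rw [eval_node_of_apply_eq t0 t1 ((mem_subcubeSlice.1 hX).1 i hi)]
  simp only [boundaryErrors, eval_eq]

theorem choose_le_boundaryErrors (T : DTree N) {S : Finset (Fin N)} (σ : Fin N → Bool) (a : ℕ)
    (hT : T.cost < #S) : (#S - 1).choose a ≤ T.boundaryErrors S σ a := by
  induction T generalizing S σ a with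
  | leaf b =>
    obtain ⟨m, hm⟩ : ∃ m, #S = m + 1 := Nat.exists_eq_add_one.2 hT
    cases b <;> simp [boundaryErrors, eval, card_subcubeSlice, hm, Nat.choose_succ_succ',
      Nat.choose_le_succ]
  | node i t0 t1 ih0 ih1 =>
    by_cases hi : i ∈ S
    · have hcard : #(S.erase i) = #S - 1 := card_erase_of_mem hi
      have h0' : t0.cost < #(S.erase i) := by simp only [cost] at hT; omega
      have h1' : t1.cost < #(S.erase i) := by simp only [cost] at hT; omega
      cases a with
      | zero =>
        calc (#S - 1).choose 0 = (#(S.erase i) - 1).choose 0 := by simp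
          _ ≤ t0.boundaryErrors (S.erase i) (Function.update σ i false) 0 := ih0 _ 0 h0'
          _ ≤ (node i t0 t1).boundaryErrors S σ 0 := add_le_add
              (card_le_card (filter_eval_subcubeSlice_erase_subset hi σ t0 t1 false 0 true))
              (card_le_card (filter_eval_subcubeSlice_erase_subset hi σ t0 t1 false 1 false))
      | succ a =>
        have hsplit_ones := card_filter_eval_add_card_filter_eval_le hi σ t0 t1 a true
        have hsplit_zeros := card_filter_eval_add_card_filter_eval_le hi σ t0 t1 (a + 1) false
        calc (#S - 1).choose (a + 1)
            = (#(S.erase i) - 1).choose a + (#(S.erase i) - 1).choose (a + 1) := by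
              rw [← Nat.choose_succ_succ', hcard]; congr 1; omega
          _ ≤ t1.boundaryErrors (S.erase i) (Function.update σ i true) a +
                t0.boundaryErrors (S.erase i) (Function.update σ i false) (a + 1) :=
              add_le_add (ih1 _ a h1') (ih0 _ (a + 1) h0')
          _ ≤ (node i t0 t1).boundaryErrors S σ (a + 1) := by
              unfold boundaryErrors; omega
    · rw [boundaryErrors_node_of_notMem hi]
      cases σ i
      · exact ih0 σ a (by simp only [cost] at hT; omega)
      · exact ih1 σ a (by simp only [cost] at hT; omega)

lemma boundaryErrors_le_card_filter_ne_majority {n : ℕ} (T : DTree (n + 1))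
    (σ : Fin (n + 1) → Bool) :
    T.boundaryErrors univ σ (n / 2) ≤
      #{X ∈ subcubeSlice univ σ (n / 2) ∪ subcubeSlice univ σ (n / 2 + 1) |
        T.eval X ≠ majority X} := by
  have majority_of_mem {w : ℕ} {X : Fin (n + 1) → Bool} (hX : X ∈ subcubeSlice univ σ w) :
      majority X = decide (n + 1 ≤ 2 * w) := by
    rw [majority_eq_decide, Fintype.card_fin, ← (mem_subcubeSlice.1 hX).2]
  rw [filter_union, card_union_of_disjoint
    (disjoint_filter_filter (disjoint_subcubeSlice_of_ne univ σ (by omega)))]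
  refine add_le_add (card_le_card fun X hX => ?_) (card_le_card fun X hX => ?_) <;>
    rw [mem_filter] at hX ⊢ <;>
    refine ⟨hX.1, ?_⟩ <;>
    rw [hX.2, majority_of_mem hX.1]
  · rw [decide_eq_false (by omega)]; decide
  · rw [decide_eq_true (by omega)]; decide

end DTree

lemma choose_succ_succ_lt_four_mul_choose (n : ℕ) :
    (n + 2).choose (n / 2 + 1) < 4 * n.choose (n / 2) := by
  set a := n / 2
  have hpos : 0 < n.choose a := Nat.choose_pos (Nat.div_le_self n 2)
  have identity : (n + 2).choose (a + 1) * ((a + 1) * (n + 1 - a)) =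
      (n + 2) * (n + 1) * n.choose a := by
    calc (n + 2).choose (a + 1) * ((a + 1) * (n + 1 - a))
        = (n + 2) * ((n + 1).choose a * (n + 1 - a)) := by
          rw [← mul_assoc, ← Nat.add_one_mul_choose_eq]; ring
      _ = (n + 2) * (n + 1) * n.choose a := by rw [← Nat.choose_mul_succ_eq]; ring
  have hquad : (n + 2) * (n + 1) < 4 * ((a + 1) * (n + 1 - a)) := by
    rcases Nat.even_or_odd' n with ⟨k, rfl | rfl⟩
    · have ha : a = k := by omega
      rw [ha, show 2 * k + 1 - k = k + 1 by omega]; nlinarith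
    · have ha : a = k := by omega
      rw [ha, show 2 * k + 1 + 1 - k = k + 2 by omega]; nlinarith
  refine Nat.lt_of_mul_lt_mul_right (a := (a + 1) * (n + 1 - a)) ?_
  rw [identity]
  nlinarith

open scoped ENNReal in
lemma PMF.natCast_le_sum_toOuterMeasure {α β : Type*} (p : PMF α) (W : Finset β) (A : β → Set α)
    (c : ℕ) [∀ x, DecidablePred (x ∈ A ·)] (h : ∀ x ∈ p.support, c ≤ #{y ∈ W | x ∈ A y}) :
    (c : ℝ≥0∞) ≤ ∑ y ∈ W, p.toOuterMeasure (A y) := by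
  calc (c : ℝ≥0∞) = ∑' x, c * p x := by rw [ENNReal.tsum_mul_left, p.tsum_coe, mul_one]
    _ ≤ ∑' x, #{y ∈ W | x ∈ A y} * p x := ENNReal.tsum_le_tsum fun x => by
        by_cases hx : p x = 0
        · simp [hx]
        · gcongr
          exact_mod_cast h x hx
    _ = ∑' x, ∑ y ∈ W, (A y).indicator p x := by
        congr 1; funext x
        simp [Set.indicator_apply, sum_ite, nsmul_eq_mul]
    _ = ∑ y ∈ W, p.toOuterMeasure (A y) := by
        simp only [p.toOuterMeasure_apply]
        exact Summable.tsum_finsetSum fun _ _ => ENNReal.summable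

/-- Any randomized decision tree (a probability distribution over
deterministic decision trees) computing MAJORITY on N bits with two-sided
error at most 1/4 on every input must have cost at least N: some tree in its
support has depth at least N. -/
theorem stmt_10 (N : ℕ) (𝒯 : PMF (DTree N))
    (herr : ∀ X : Fin N → Bool,
      𝒯.toOuterMeasure {T | T.eval X ≠
        decide ((Finset.univ.filter fun i => X i = false).card ≤
                (Finset.univ.filter fun i => X i = true).card)} ≤ 1 / 4) :
    ∃ T ∈ 𝒯.support, N ≤ T.cost := by
  by_contra! hcost
  obtain ⟨T₀, hT₀⟩ := 𝒯.support_nonempty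
  obtain ⟨n, rfl⟩ := Nat.exists_eq_add_one.2 ((Nat.zero_le _).trans_lt (hcost T₀ hT₀))
  let σ : Fin (n + 1) → Bool := fun _ => false
  let W := subcubeSlice univ σ (n / 2) ∪ subcubeSlice univ σ (n / 2 + 1)
  have hW : #W = (n + 2).choose (n / 2 + 1) := by
    rw [card_union_of_disjoint (disjoint_subcubeSlice_of_ne univ σ (by omega)), card_subcubeSlice,
      card_subcubeSlice, card_univ, Fintype.card_fin, Nat.choose_succ_succ' (n + 1)]
  have herrors : ∀ T ∈ 𝒯.support,
      n.choose (n / 2) ≤ #{X ∈ W | T ∈ {T' | T'.eval X ≠ majority X}} := fun T hT => by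
      have hchoose := T.choose_le_boundaryErrors (S := univ) σ (n / 2)
        (by rw [card_univ, Fintype.card_fin]; exact hcost T hT)
      rw [card_univ, Fintype.card_fin, Nat.add_sub_cancel] at hchoose
      exact hchoose.trans (T.boundaryErrors_le_card_filter_ne_majority σ)
  have hlow := 𝒯.natCast_le_sum_toOuterMeasure W _ _ herrors
  have hup := sum_le_card_nsmul W _ _ fun X _ => herr X
  have hfour : 4 * n.choose (n / 2) ≤ (n + 2).choose (n / 2 + 1) := by
    rw [← hW]
    have := hlow.trans hup
    rw [nsmul_eq_mul, mul_one_div, ENNReal.le_div_iff_mul_le (by simp) (by simp)] at this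
    exact_mod_cast (mul_comm _ _).trans_le this
  exact (choose_succ_succ_lt_four_mul_choose n).not_ge hfour
end

section
/- Let N = A + B with A, B ≥ 0, and let X be a uniformly random binary string with exactly A ones and B zeros. Assume N is even and pair up positions (1,2), (3,4), …, (N-1, N). Let c(X) be the number of pairs whose two bits differ. Then E[c(X)] = AB/(N-1), and for all λ ≥ 0, Pr[|c(X) - AB/(N-1)| ≥ λ] ≤ 2·exp(-λ²/(4N)). -/
open scoped Classical
open Finset

namespace Stmt15

noncomputable section

def cnt (n : ℕ) (X : Fin n → Bool) : ℕ := (Finset.univ.filter fun i => X i = true).card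

def mis (m : ℕ) (X : Fin (2 * m) → Bool) : ℕ :=
  (Finset.univ.filter fun i : Fin m =>
      X ⟨2 * i.1, by have := i.2; omega⟩ ≠ X ⟨2 * i.1 + 1, by have := i.2; omega⟩).card

lemma sum_pi_succ {n : ℕ} (G : (Fin (n + 1) → Bool) → ℝ) :
    ∑ X : Fin (n + 1) → Bool, G X = ∑ b : Bool, ∑ Y : Fin n → Bool, G (Fin.cons b Y) := by
  have h := Fintype.sum_equiv (Fin.consEquiv fun _ => Bool)
    (fun p : Bool × (Fin n → Bool) => G (Fin.cons p.1 p.2)) G (fun p => rfl)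
  rw [← h, Fintype.sum_prod_type]

lemma cnt_cons {n : ℕ} (b : Bool) (Y : Fin n → Bool) :
    cnt (n + 1) (Fin.cons b Y) = b.toNat + cnt n Y := by
  unfold cnt
  rw [Finset.card_filter, Finset.card_filter, Fin.sum_univ_succ]
  cases b <;> simp [Fin.cons_zero, Fin.cons_succ]

lemma cnt_le {n : ℕ} (X : Fin n → Bool) : cnt n X ≤ n :=
  le_trans (Finset.card_filter_le _ _) (by simp)

lemma cnt_zero (X : Fin 0 → Bool) : cnt 0 X = 0 := by
  unfold cnt; simp

lemma mis_zero (X : Fin (2 * 0) → Bool) : mis 0 X = 0 := by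
  unfold mis
  have : (Finset.univ : Finset (Fin 0)) = ∅ := rfl
  simp

lemma mis_succ (m : ℕ) (X : Fin (2 * m + 1 + 1) → Bool) :
    mis (m + 1) X = (if X 0 = X 1 then 0 else 1) + mis m (fun i => X i.succ.succ) := by
  unfold mis
  rw [Finset.card_filter, Finset.card_filter, Fin.sum_univ_succ]
  congr 1
  · have h0 : (⟨2 * ((0 : Fin (m+1)) : ℕ), by omega⟩ : Fin (2 * m + 1 + 1)) = 0 := by
      ext; simp
    have h1 : (⟨2 * ((0 : Fin (m+1)) : ℕ) + 1, by omega⟩ : Fin (2 * m + 1 + 1)) = 1 := by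
      ext; simp
    rw [h0, h1]
    by_cases h : X 0 = X 1 <;> simp [h]

lemma mis_cons (m : ℕ) (b₀ b₁ : Bool) (Y : Fin (2 * m) → Bool) :
    mis (m + 1) (Fin.cons b₀ (Fin.cons b₁ Y)) = (b₀ ^^ b₁).toNat + mis m Y := by
  rw [mis_succ]
  rw [Fin.cons_zero, Fin.cons_one]
  cases b₀ <;> cases b₁ <;> rfl

lemma card_S (n A : ℕ) :
    ((Finset.univ.filter fun X : Fin n → Bool => cnt n X = A).card) = n.choose A := by
  classical
  have key : (Finset.univ.filter fun X : Fin n → Bool => cnt n X = A).card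
      = (Finset.powersetCard A (Finset.univ : Finset (Fin n))).card := by
    apply Finset.card_bij (fun X _ => Finset.univ.filter fun i => X i = true)
    · intro X hX
      simp only [Finset.mem_filter, Finset.mem_univ, true_and] at hX
      simp [Finset.mem_powersetCard, hX, cnt] at hX ⊢
      exact hX
    · intro X hX X' hX' h
      funext i
      have : (i ∈ Finset.univ.filter fun j => X j = true) ↔
          (i ∈ Finset.univ.filter fun j => X' j = true) := by rw [h]
      simpa using this
    · intro s hs
      refine ⟨fun i => decide (i ∈ s), ?_, ?_⟩
      · simp only [Finset.mem_filter, Finset.mem_univ, true_and, cnt]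
        simp only [Finset.mem_powersetCard] at hs
        have : (Finset.univ.filter fun i => decide (i ∈ s) = true) = s := by
          ext i; simp
        exact Finset.mem_filter.mpr ⟨Finset.mem_univ _, by show cnt n (fun i => decide (i ∈ s)) = A; unfold cnt; rw [this, hs.2]⟩
      · ext i; simp
  rw [key, Finset.card_powersetCard, Finset.card_univ, Fintype.card_fin]


def S2 (g : ℕ → ℝ) (A m : ℕ) : ℝ :=
  ∑ X : Fin (2 * m) → Bool, if cnt (2 * m) X = A then g (mis m X) else 0

lemma S2_base (g : ℕ → ℝ) (A : ℕ) : S2 g A 0 = if A = 0 then g 0 else 0 := by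
  unfold S2
  have : (∑ X : Fin 0 → Bool, if cnt 0 X = A then g (mis 0 X) else 0)
      = if A = 0 then g 0 else 0 := by
    rw [Fintype.sum_unique, cnt_zero, mis_zero]
    by_cases h : A = 0 <;> simp [h, eq_comm]
  exact this

lemma S2_succ (g : ℕ → ℝ) (A m : ℕ) :
    S2 g A (m + 1) = ∑ b₀ : Bool, ∑ b₁ : Bool, ∑ Y : Fin (2 * m) → Bool,
      (if b₀.toNat + (b₁.toNat + cnt (2 * m) Y) = A
       then g ((b₀ ^^ b₁).toNat + mis m Y) else 0) := by
  show (∑ X : Fin (2 * m + 1 + 1) → Bool,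
      if cnt (2 * m + 1 + 1) X = A then g (mis (m + 1) X) else 0) = _
  rw [sum_pi_succ]
  refine Finset.sum_congr rfl fun b₀ _ => ?_
  rw [sum_pi_succ fun Y' : Fin (2 * m + 1) → Bool =>
    (if cnt (2 * m + 1 + 1) (Fin.cons b₀ Y') = A then g (mis (m + 1) (Fin.cons b₀ Y')) else 0)]
  refine Finset.sum_congr rfl fun b₁ _ => Finset.sum_congr rfl fun Y _ => ?_
  rw [cnt_cons, cnt_cons, mis_cons]

lemma S2_zero_succ (g : ℕ → ℝ) (m : ℕ) : S2 g 0 (m + 1) = S2 g 0 m := by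
  rw [S2_succ, Fintype.sum_bool, Fintype.sum_bool, Fintype.sum_bool]
  simp only [Bool.toNat_true, Bool.toNat_false, Bool.xor_self, Bool.true_xor, Bool.xor_false,
    Bool.false_xor, Bool.not_true, zero_add]
  have z1 : (∑ Y : Fin (2 * m) → Bool,
      if 1 + (1 + cnt (2 * m) Y) = 0 then g (mis m Y) else 0) = 0 :=
    Finset.sum_eq_zero fun Y _ => if_neg (by omega)
  have z2 : (∑ Y : Fin (2 * m) → Bool,
      if 1 + cnt (2 * m) Y = 0 then g (1 + mis m Y) else 0) = 0 :=
    Finset.sum_eq_zero fun Y _ => if_neg (by omega)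
  rw [z1, z2]
  unfold S2
  ring

lemma S2_one_succ (g : ℕ → ℝ) (m : ℕ) :
    S2 g 1 (m + 1) = 2 * S2 (fun k => g (1 + k)) 0 m + S2 g 1 m := by
  rw [S2_succ, Fintype.sum_bool, Fintype.sum_bool, Fintype.sum_bool]
  simp only [Bool.toNat_true, Bool.toNat_false, Bool.xor_self, Bool.true_xor, Bool.xor_false,
    Bool.false_xor, Bool.not_true, zero_add]
  have e1 : (∑ Y : Fin (2 * m) → Bool,
      if 1 + cnt (2 * m) Y = 1 then g (1 + mis m Y) else 0)
      = ∑ Y : Fin (2 * m) → Bool,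
        (if cnt (2 * m) Y = 0 then g (1 + mis m Y) else 0) := by
    refine Finset.sum_congr rfl fun Y _ => ?_
    have hc : (1 + cnt (2 * m) Y = 1) ↔ (cnt (2 * m) Y = 0) := by omega
    exact if_congr hc rfl rfl
  have z1 : (∑ Y : Fin (2 * m) → Bool,
      if 1 + (1 + cnt (2 * m) Y) = 1 then g (mis m Y) else 0) = 0 :=
    Finset.sum_eq_zero fun Y _ => if_neg (by omega)
  rw [e1, z1]
  unfold S2
  ring

lemma S2_two_succ (g : ℕ → ℝ) (a m : ℕ) :
    S2 g (a + 2) (m + 1)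
      = S2 g (a + 2) m + 2 * S2 (fun k => g (1 + k)) (a + 1) m + S2 g a m := by
  rw [S2_succ, Fintype.sum_bool, Fintype.sum_bool, Fintype.sum_bool]
  simp only [Bool.toNat_true, Bool.toNat_false, Bool.xor_self, Bool.true_xor, Bool.xor_false,
    Bool.false_xor, Bool.not_true, zero_add]
  have c1 : (∑ Y : Fin (2 * m) → Bool,
      if 1 + (1 + cnt (2 * m) Y) = a + 2 then g (mis m Y) else 0)
      = ∑ Y : Fin (2 * m) → Bool,
        (if cnt (2 * m) Y = a then g (mis m Y) else 0) := by
    refine Finset.sum_congr rfl fun Y _ => ?_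
    have hc : (1 + (1 + cnt (2 * m) Y) = a + 2) ↔ (cnt (2 * m) Y = a) := by omega
    exact if_congr hc rfl rfl
  have c2 : (∑ Y : Fin (2 * m) → Bool,
      if 1 + cnt (2 * m) Y = a + 2 then g (1 + mis m Y) else 0)
      = ∑ Y : Fin (2 * m) → Bool,
        (if cnt (2 * m) Y = a + 1 then g (1 + mis m Y) else 0) := by
    refine Finset.sum_congr rfl fun Y _ => ?_
    have hc : (1 + cnt (2 * m) Y = a + 2) ↔ (cnt (2 * m) Y = a + 1) := by omega
    exact if_congr hc rfl rfl
  rw [c1, c2]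
  unfold S2
  ring

lemma S2_congr {g g' : ℕ → ℝ} (h : ∀ k, g k = g' k) (A m : ℕ) : S2 g A m = S2 g' A m := by
  unfold S2; exact Finset.sum_congr rfl fun X _ => by rw [h]

lemma S2_mul (c : ℝ) (g : ℕ → ℝ) (A m : ℕ) :
    S2 (fun k => c * g k) A m = c * S2 g A m := by
  unfold S2
  rw [Finset.mul_sum]
  exact Finset.sum_congr rfl fun X _ => by by_cases h : cnt (2 * m) X = A <;> simp [h]

lemma S2_add (g h : ℕ → ℝ) (A m : ℕ) :
    S2 (fun k => g k + h k) A m = S2 g A m + S2 h A m := by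
  unfold S2
  rw [← Finset.sum_add_distrib]
  exact Finset.sum_congr rfl fun X _ => by by_cases hx : cnt (2 * m) X = A <;> simp [hx]

lemma S2_one (A m : ℕ) : S2 (fun _ => (1 : ℝ)) A m = ((2 * m).choose A : ℝ) := by
  unfold S2
  rw [Finset.sum_boole, ← card_S (2 * m) A]

lemma S2_vanish (g : ℕ → ℝ) {A m : ℕ} (h : 2 * m < A) : S2 g A m = 0 :=
  Finset.sum_eq_zero fun X _ => if_neg (by have := cnt_le X; omega)

lemma S2_nonneg {g : ℕ → ℝ} (hg : ∀ k, 0 ≤ g k) (A m : ℕ) : 0 ≤ S2 g A m :=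
  Finset.sum_nonneg fun X _ => by by_cases h : cnt (2 * m) X = A <;> simp [h, hg]

def Z (t : ℝ) (A m : ℕ) : ℝ := S2 (fun k => Real.exp (t * k)) A m
def W (A m : ℕ) : ℝ := S2 (fun k => (k : ℝ)) A m
def mu (A m : ℕ) : ℝ := A * (2 * (m : ℝ) - A) / (2 * (m : ℝ) - 1)

lemma Z_base (t : ℝ) (A : ℕ) : Z t A 0 = if A = 0 then 1 else 0 := by
  unfold Z; rw [S2_base]; simp

lemma Z_zero_succ (t : ℝ) (m : ℕ) : Z t 0 (m + 1) = Z t 0 m := S2_zero_succ _ _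

lemma exp_shift (t : ℝ) : ∀ k : ℕ, Real.exp (t * (1 + k : ℕ)) = Real.exp t * Real.exp (t * k) := by
  intro k
  rw [← Real.exp_add]
  congr 1
  push_cast
  ring

lemma Z_one_succ (t : ℝ) (m : ℕ) :
    Z t 1 (m + 1) = 2 * Real.exp t * Z t 0 m + Z t 1 m := by
  unfold Z
  rw [S2_one_succ]
  rw [S2_congr (exp_shift t), S2_mul]
  ring

lemma Z_two_succ (t : ℝ) (a m : ℕ) :
    Z t (a + 2) (m + 1)
      = Z t (a + 2) m + 2 * Real.exp t * Z t (a + 1) m + Z t a m := by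
  unfold Z
  rw [S2_two_succ]
  rw [S2_congr (exp_shift t), S2_mul]
  ring

lemma Z_nonneg (t : ℝ) (A m : ℕ) : 0 ≤ Z t A m :=
  S2_nonneg (fun k => (Real.exp_pos _).le) A m

lemma W_base (A : ℕ) : W A 0 = 0 := by
  unfold W; rw [S2_base]; simp

lemma W_zero_succ (m : ℕ) : W 0 (m + 1) = W 0 m := S2_zero_succ _ _

lemma cast_shift : ∀ k : ℕ, ((1 + k : ℕ) : ℝ) = 1 + (k : ℝ) := by intro k; push_cast; ring

lemma W_one_succ (m : ℕ) :
    W 1 (m + 1) = 2 * (((2 * m).choose 0 : ℝ) + W 0 m) + W 1 m := by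
  unfold W
  rw [S2_one_succ, S2_congr cast_shift, S2_add, S2_one]

lemma W_two_succ (a m : ℕ) :
    W (a + 2) (m + 1)
      = W (a + 2) m + 2 * (((2 * m).choose (a + 1) : ℝ) + W (a + 1) m) + W a m := by
  unfold W
  rw [S2_two_succ, S2_congr cast_shift, S2_add, S2_one]


lemma denom_ne (m : ℕ) : 2 * (m : ℝ) - 1 ≠ 0 := by
  rcases m with _ | k
  · norm_num
  · have h : (0 : ℝ) ≤ (k : ℝ) := Nat.cast_nonneg k
    push_cast
    intro hc
    nlinarith

lemma mu_zero (m : ℕ) : mu 0 m = 0 := by simp [mu]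

lemma mu_one (m : ℕ) : mu 1 m = 1 := by
  unfold mu
  rw [div_eq_one_iff_eq (denom_ne m)]
  push_cast
  ring

lemma R1 (a m : ℕ) (ha : a ≤ 2 * m) :
    ((a : ℝ) + 2) * (2 * (m : ℝ) - a) * (((2 * m + 2).choose (a + 2) : ℕ) : ℝ)
      = (2 * (m : ℝ) + 2) * (2 * (m : ℝ) + 1) * (((2 * m).choose (a + 1) : ℕ) : ℝ) := by
  have hc0 : ((2 * m - a : ℕ) : ℝ) = 2 * (m : ℝ) - a := by
    rw [Nat.cast_sub ha]; push_cast; ring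
  have h1 := Nat.add_one_mul_choose_eq (2 * m + 1) (a + 1)
  have h3 := Nat.choose_mul_succ_eq (2 * m) (a + 1)
  have hsub : 2 * m + 1 - (a + 1) = 2 * m - a := by omega
  rw [hsub] at h3
  have h1c := congrArg (Nat.cast (R := ℝ)) h1
  have h3c := congrArg (Nat.cast (R := ℝ)) h3
  push_cast [hc0] at h1c h3c
  linear_combination (-(2 * (m : ℝ) - a)) * h1c - (2 * (m : ℝ) + 2) * h3c

lemma R2 (a m : ℕ) :
    ((a : ℝ) + 2) * ((a : ℝ) + 1) * (((2 * m + 2).choose (a + 2) : ℕ) : ℝ)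
      = (2 * (m : ℝ) + 2) * (2 * (m : ℝ) + 1) * (((2 * m).choose a : ℕ) : ℝ) := by
  have h1 := Nat.add_one_mul_choose_eq (2 * m + 1) (a + 1)
  have h2 := Nat.add_one_mul_choose_eq (2 * m) a
  have h1c := congrArg (Nat.cast (R := ℝ)) h1
  have h2c := congrArg (Nat.cast (R := ℝ)) h2
  push_cast at h1c h2c
  linear_combination (-((a : ℝ) + 1)) * h1c - (2 * (m : ℝ) + 2) * h2c

lemma R3 (a m : ℕ) (ha : a ≤ 2 * m) :
    (2 * (m : ℝ) - a) * (2 * (m : ℝ) - a - 1) * (((2 * m + 2).choose (a + 2) : ℕ) : ℝ)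
      = (2 * (m : ℝ) + 2) * (2 * (m : ℝ) + 1) * (((2 * m).choose (a + 2) : ℕ) : ℝ) := by
  rcases Nat.lt_or_ge a (2 * m - 1) with h | h
  · have ha2 : a + 2 ≤ 2 * m := by omega
    have hc0 : ((2 * m - a : ℕ) : ℝ) = 2 * (m : ℝ) - a := by
      rw [Nat.cast_sub ha]; push_cast; ring
    have hc1 : ((2 * m - a - 1 : ℕ) : ℝ) = 2 * (m : ℝ) - a - 1 := by
      rw [show 2 * m - a - 1 = 2 * m - (a + 1) from by omega, Nat.cast_sub (by omega)]
      push_cast; ring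
    have hc2 : ((2 * m - a - 2 : ℕ) : ℝ) = 2 * (m : ℝ) - a - 2 := by
      rw [show 2 * m - a - 2 = 2 * m - (a + 2) from by omega, Nat.cast_sub (by omega)]
      push_cast; ring
    have hsymm2 : (2 * m + 2).choose (a + 2) = (2 * m + 2).choose (2 * m - a) := by
      rw [show 2 * m - a = 2 * m + 2 - (a + 2) from by omega]
      rw [Nat.choose_symm (by omega)]
    have hsymm0 : (2 * m).choose (a + 2) = (2 * m).choose (2 * m - a - 2) := by
      rw [show 2 * m - a - 2 = 2 * m - (a + 2) from by omega]
      rw [Nat.choose_symm ha2]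
    have h1 := Nat.add_one_mul_choose_eq (2 * m + 1) (2 * m - a - 1)
    have h2 := Nat.add_one_mul_choose_eq (2 * m) (2 * m - a - 2)
    rw [show 2 * m - a - 1 + 1 = 2 * m - a from by omega] at h1
    rw [show 2 * m - a - 2 + 1 = 2 * m - a - 1 from by omega] at h2
    have h1c := congrArg (Nat.cast (R := ℝ)) h1
    have h2c := congrArg (Nat.cast (R := ℝ)) h2
    push_cast [hc0, hc1, hc2] at h1c h2c
    rw [hsymm2, hsymm0]
    linear_combination (-(2 * (m : ℝ) - a - 1)) * h1c - (2 * (m : ℝ) + 2) * h2c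
  · have hz : ((2 * m).choose (a + 2) : ℝ) = 0 := by
      rw [Nat.choose_eq_zero_of_lt (by omega)]; norm_num
    rw [hz]
    rcases Nat.eq_or_lt_of_le ha with he | hlt
    · have hxe : (a : ℝ) = 2 * (m : ℝ) := by
        have := congrArg (Nat.cast (R := ℝ)) he
        push_cast at this
        linarith
      linear_combination (-(2 * (m : ℝ) - (a : ℝ) - 1) *
        (((2 * m + 2).choose (a + 2) : ℕ) : ℝ)) * hxe
    · have hae : a = 2 * m - 1 := by omega
      have hxe : (a : ℝ) = 2 * (m : ℝ) - 1 := by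
        rw [hae, Nat.cast_sub (by omega)]; push_cast; ring
      linear_combination (-(2 * (m : ℝ) - (a : ℝ)) *
        (((2 * m + 2).choose (a + 2) : ℕ) : ℝ)) * hxe


lemma chord {t d w : ℝ} (hw : 0 ≤ w) (h : w = 0 ∨ |d| ≤ 2) :
    w * Real.exp (t * d)
      ≤ w * ((2 - d) / 4 * Real.exp (-(2 * t)) + (2 + d) / 4 * Real.exp (2 * t)) := by
  rcases h with h | h
  · simp [h]
  · rw [abs_le] at h
    apply mul_le_mul_of_nonneg_left _ hw
    have hcx := convexOn_exp.2 (Set.mem_univ (-(2 * t))) (Set.mem_univ (2 * t))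
      (show (0:ℝ) ≤ (2 - d) / 4 by linarith) (show (0:ℝ) ≤ (2 + d) / 4 by linarith)
      (show (2 - d) / 4 + (2 + d) / 4 = 1 by ring)
    simp only [smul_eq_mul] at hcx
    rw [show (2 - d) / 4 * -(2 * t) + (2 + d) / 4 * (2 * t) = t * d by ring] at hcx
    exact hcx

lemma core (t x y : ℝ) (hx0 : 0 ≤ x) (hxy : x ≤ 2 * y) (hy1 : 1 ≤ y)
    (hq0 : 0 ≤ (2 * y - x) * (2 * y - x - 1))
    (hd3 : (2 * y - x) * (2 * y - x - 1) = 0 ∨ (x + 2) * (x + 1) ≤ (2 * y - 1) * (2 * y + 1)) :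
    2 * (x + 2) * (2 * y - x) / ((2 * y + 2) * (2 * y + 1))
        * Real.exp (t * (2 * (x + 1) * (2 * y - x - 1) / ((2 * y - 1) * (2 * y + 1))))
      + (x + 2) * (x + 1) / ((2 * y + 2) * (2 * y + 1))
        * Real.exp (t * (-(2 * (2 * y - x) * (2 * y - x - 1)) / ((2 * y - 1) * (2 * y + 1))))
      + (2 * y - x) * (2 * y - x - 1) / ((2 * y + 2) * (2 * y + 1))
        * Real.exp (t * (-(2 * (x + 2) * (x + 1)) / ((2 * y - 1) * (2 * y + 1))))
      ≤ Real.exp (2 * t ^ 2) := by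
  have hD : (0:ℝ) < (2 * y - 1) * (2 * y + 1) := by nlinarith
  have hN : (0:ℝ) < (2 * y + 2) * (2 * y + 1) := by nlinarith
  set D : ℝ := (2 * y - 1) * (2 * y + 1) with hDdef
  set NN : ℝ := (2 * y + 2) * (2 * y + 1) with hNdef
  set p : ℝ := 2 * (x + 2) * (2 * y - x) / NN with hpdef
  set q1 : ℝ := (x + 2) * (x + 1) / NN with hq1def
  set q0 : ℝ := (2 * y - x) * (2 * y - x - 1) / NN with hq0def
  set d1 : ℝ := 2 * (x + 1) * (2 * y - x - 1) / D with hd1def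
  set d2 : ℝ := -(2 * (2 * y - x) * (2 * y - x - 1)) / D with hd2def
  set d3 : ℝ := -(2 * (x + 2) * (x + 1)) / D with hd3def
  have hp0 : 0 ≤ p := by
    rw [hpdef]
    apply div_nonneg _ hN.le
    nlinarith
  have hq10 : 0 ≤ q1 := by
    rw [hq1def]
    apply div_nonneg _ hN.le
    nlinarith
  have hq00 : 0 ≤ q0 := div_nonneg hq0 hN.le
  have hsum : p + q1 + q0 = 1 := by
    rw [hpdef, hq1def, hq0def, hNdef]
    field_simp
    ring
  have hmean : p * d1 + q1 * d2 + q0 * d3 = 0 := by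
    rw [hpdef, hq1def, hq0def, hd1def, hd2def, hd3def, hNdef, hDdef]
    field_simp
    ring
  have hb1 : |d1| ≤ 2 := by
    rw [hd1def, abs_le]
    constructor
    · rw [le_div_iff₀ hD]
      nlinarith
    · rw [div_le_iff₀ hD]
      nlinarith [sq_nonneg (x + 1 - (2 * y - x - 1)), sq_nonneg (y - 1)]
  have hb2 : |d2| ≤ 2 := by
    rw [hd2def, abs_le]
    constructor
    · rw [le_div_iff₀ hD]
      nlinarith [sq_nonneg (2 * (2 * y - x) - 1)]
    · rw [div_le_iff₀ hD]
      nlinarith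
  have hb3 : q0 = 0 ∨ |d3| ≤ 2 := by
    rcases hd3 with h | h
    · left
      rw [hq0def, h, zero_div]
    · right
      rw [hd3def, abs_le]
      constructor
      · rw [le_div_iff₀ hD]
        nlinarith
      · rw [div_le_iff₀ hD]
        nlinarith
  have ch1 := chord (t := t) (d := d1) hp0 (Or.inr hb1)
  have ch2 := chord (t := t) (d := d2) hq10 (Or.inr hb2)
  have ch3 := chord (t := t) (d := d3) hq00 hb3
  have coefA : p * ((2 - d1) / 4) + q1 * ((2 - d2) / 4) + q0 * ((2 - d3) / 4) = 1 / 2 := by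
    linear_combination (1 / 2 : ℝ) * hsum - (1 / 4 : ℝ) * hmean
  have coefB : p * ((2 + d1) / 4) + q1 * ((2 + d2) / 4) + q0 * ((2 + d3) / 4) = 1 / 2 := by
    linear_combination (1 / 2 : ℝ) * hsum + (1 / 4 : ℝ) * hmean
  have expand : p * ((2 - d1) / 4 * Real.exp (-(2 * t)) + (2 + d1) / 4 * Real.exp (2 * t))
      + q1 * ((2 - d2) / 4 * Real.exp (-(2 * t)) + (2 + d2) / 4 * Real.exp (2 * t))
      + q0 * ((2 - d3) / 4 * Real.exp (-(2 * t)) + (2 + d3) / 4 * Real.exp (2 * t))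
      = (p * ((2 - d1) / 4) + q1 * ((2 - d2) / 4) + q0 * ((2 - d3) / 4)) * Real.exp (-(2 * t))
        + (p * ((2 + d1) / 4) + q1 * ((2 + d2) / 4) + q0 * ((2 + d3) / 4)) * Real.exp (2 * t) := by
    ring
  have hcosh : (1 / 2) * Real.exp (-(2 * t)) + (1 / 2) * Real.exp (2 * t) ≤ Real.exp (2 * t ^ 2) := by
    have h1 := Real.cosh_le_exp_half_sq (2 * t)
    rw [Real.cosh_eq] at h1
    rw [show (2 * t) ^ 2 / 2 = 2 * t ^ 2 by ring] at h1
    linarith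
  calc p * Real.exp (t * d1) + q1 * Real.exp (t * d2) + q0 * Real.exp (t * d3)
      ≤ p * ((2 - d1) / 4 * Real.exp (-(2 * t)) + (2 + d1) / 4 * Real.exp (2 * t))
        + q1 * ((2 - d2) / 4 * Real.exp (-(2 * t)) + (2 + d2) / 4 * Real.exp (2 * t))
        + q0 * ((2 - d3) / 4 * Real.exp (-(2 * t)) + (2 + d3) / 4 * Real.exp (2 * t)) :=
        add_le_add (add_le_add ch1 ch2) ch3
    _ = (1 / 2) * Real.exp (-(2 * t)) + (1 / 2) * Real.exp (2 * t) := by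
        rw [expand, coefA, coefB]
    _ ≤ Real.exp (2 * t ^ 2) := hcosh


lemma mean_id (a m : ℕ) (hm : 1 ≤ m) :
    2 * ((a : ℝ) + 2) * (2 * (m : ℝ) - a) / ((2 * (m : ℝ) + 2) * (2 * (m : ℝ) + 1))
        * (1 + mu (a + 1) m)
      + ((a : ℝ) + 2) * ((a : ℝ) + 1) / ((2 * (m : ℝ) + 2) * (2 * (m : ℝ) + 1)) * mu a m
      + (2 * (m : ℝ) - a) * (2 * (m : ℝ) - a - 1) / ((2 * (m : ℝ) + 2) * (2 * (m : ℝ) + 1))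
        * mu (a + 2) m
      = mu (a + 2) (m + 1) := by
  have hy1 : (1 : ℝ) ≤ (m : ℝ) := by exact_mod_cast hm
  have hden1 := denom_ne m
  have hden2 : 2 * ((m : ℝ) + 1) - 1 ≠ 0 := by
    have := denom_ne (m + 1); push_cast at this; exact this
  have hNN : ((2 * (m : ℝ) + 2) * (2 * (m : ℝ) + 1)) ≠ 0 := by nlinarith [hy1]
  unfold mu
  push_cast
  field_simp
  ring

lemma key_ineq (t : ℝ) (a m : ℕ) (hm : 1 ≤ m) (ha : a ≤ 2 * m) :
    ((2 * m).choose (a + 2) : ℝ) * Real.exp (t * mu (a + 2) m)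
      + 2 * Real.exp t * ((2 * m).choose (a + 1) : ℝ) * Real.exp (t * mu (a + 1) m)
      + ((2 * m).choose a : ℝ) * Real.exp (t * mu a m)
      ≤ ((2 * m + 2).choose (a + 2) : ℝ) * Real.exp (t * mu (a + 2) (m + 1) + 2 * t ^ 2) := by
  have hy1 : (1 : ℝ) ≤ (m : ℝ) := by exact_mod_cast hm
  have hx0 : (0 : ℝ) ≤ (a : ℝ) := Nat.cast_nonneg a
  have hxy : (a : ℝ) ≤ 2 * (m : ℝ) := by exact_mod_cast ha
  have hden1 := denom_ne m
  have hden2 : 2 * ((m : ℝ) + 1) - 1 ≠ 0 := by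
    have := denom_ne (m + 1); push_cast at this; exact this
  have hD : (0:ℝ) < (2 * (m : ℝ) - 1) * (2 * (m : ℝ) + 1) := by nlinarith
  have hNN : (0:ℝ) < (2 * (m : ℝ) + 2) * (2 * (m : ℝ) + 1) := by nlinarith
  have hq0 : 0 ≤ (2 * (m : ℝ) - a) * (2 * (m : ℝ) - a - 1) := by
    rcases Nat.lt_or_ge a (2 * m) with h | h
    · have h1 : (a : ℝ) + 1 ≤ 2 * (m : ℝ) := by exact_mod_cast h
      nlinarith
    · have he : a = 2 * m := le_antisymm ha h
      have : (a : ℝ) = 2 * (m : ℝ) := by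
        have := congrArg (Nat.cast (R := ℝ)) he; push_cast at this; linarith
      nlinarith [this]
  have hd3 : (2 * (m : ℝ) - a) * (2 * (m : ℝ) - a - 1) = 0
      ∨ ((a : ℝ) + 2) * ((a : ℝ) + 1) ≤ (2 * (m : ℝ) - 1) * (2 * (m : ℝ) + 1) := by
    rcases Nat.lt_or_ge a (2 * m - 1) with h | h
    · right
      have h1 : (a : ℝ) + 2 ≤ 2 * (m : ℝ) := by exact_mod_cast (by omega : a + 2 ≤ 2 * m)
      nlinarith
    · left
      rcases Nat.eq_or_lt_of_le ha with he | hlt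
      · have hc : (a : ℝ) = 2 * (m : ℝ) := by
          have := congrArg (Nat.cast (R := ℝ)) he; push_cast at this; linarith
        nlinarith [hc]
      · have hae : a = 2 * m - 1 := by omega
        have hc : (a : ℝ) = 2 * (m : ℝ) - 1 := by
          have := congrArg (Nat.cast (R := ℝ)) hae
          rw [Nat.cast_sub (by omega)] at this
          push_cast at this
          linarith
        nlinarith [hc]
  -- choose cast identities
  have hc3 : ((2 * m).choose (a + 2) : ℝ)
      = (2 * (m : ℝ) - a) * (2 * (m : ℝ) - a - 1) / ((2 * (m : ℝ) + 2) * (2 * (m : ℝ) + 1))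
        * ((2 * m + 2).choose (a + 2) : ℝ) := by
    rw [div_mul_eq_mul_div, eq_div_iff hNN.ne']
    linear_combination (-1 : ℝ) * R3 a m ha
  have hc1 : ((2 * m).choose (a + 1) : ℝ)
      = ((a : ℝ) + 2) * (2 * (m : ℝ) - a) / ((2 * (m : ℝ) + 2) * (2 * (m : ℝ) + 1))
        * ((2 * m + 2).choose (a + 2) : ℝ) := by
    rw [div_mul_eq_mul_div, eq_div_iff hNN.ne']
    linear_combination (-1 : ℝ) * R1 a m ha
  have hc2 : ((2 * m).choose a : ℝ)
      = ((a : ℝ) + 2) * ((a : ℝ) + 1) / ((2 * (m : ℝ) + 2) * (2 * (m : ℝ) + 1))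
        * ((2 * m + 2).choose (a + 2) : ℝ) := by
    rw [div_mul_eq_mul_div, eq_div_iff hNN.ne']
    linear_combination (-1 : ℝ) * R2 a m
  -- mu decompositions
  have hmu3 : mu (a + 2) m = mu (a + 2) (m + 1)
      + (-(2 * ((a : ℝ) + 2) * ((a : ℝ) + 1)) / ((2 * (m : ℝ) - 1) * (2 * (m : ℝ) + 1))) := by
    unfold mu; push_cast; field_simp; ring
  have hmu2 : mu a m = mu (a + 2) (m + 1)
      + (-(2 * (2 * (m : ℝ) - a) * (2 * (m : ℝ) - a - 1))
          / ((2 * (m : ℝ) - 1) * (2 * (m : ℝ) + 1))) := by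
    unfold mu; push_cast; field_simp; ring
  have hmu1 : mu (a + 1) m = -1 + mu (a + 2) (m + 1)
      + (2 * ((a : ℝ) + 1) * (2 * (m : ℝ) - a - 1))
          / ((2 * (m : ℝ) - 1) * (2 * (m : ℝ) + 1)) := by
    unfold mu; push_cast; field_simp; ring
  have e3 : Real.exp (t * mu (a + 2) m)
      = Real.exp (t * mu (a + 2) (m + 1))
        * Real.exp (t * (-(2 * ((a : ℝ) + 2) * ((a : ℝ) + 1))
            / ((2 * (m : ℝ) - 1) * (2 * (m : ℝ) + 1)))) := by
    rw [← Real.exp_add]; congr 1; linear_combination t * hmu3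
  have e2 : Real.exp (t * mu a m)
      = Real.exp (t * mu (a + 2) (m + 1))
        * Real.exp (t * (-(2 * (2 * (m : ℝ) - a) * (2 * (m : ℝ) - a - 1))
            / ((2 * (m : ℝ) - 1) * (2 * (m : ℝ) + 1)))) := by
    rw [← Real.exp_add]; congr 1; linear_combination t * hmu2
  have e1 : Real.exp (t * mu (a + 1) m)
      = Real.exp (-t) * (Real.exp (t * mu (a + 2) (m + 1))
        * Real.exp (t * (2 * ((a : ℝ) + 1) * (2 * (m : ℝ) - a - 1)
            / ((2 * (m : ℝ) - 1) * (2 * (m : ℝ) + 1))))) := by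
    rw [← Real.exp_add, ← Real.exp_add]; congr 1; linear_combination t * hmu1
  have hcore := core t (a : ℝ) (m : ℝ) hx0 hxy hy1 hq0 hd3
  calc ((2 * m).choose (a + 2) : ℝ) * Real.exp (t * mu (a + 2) m)
      + 2 * Real.exp t * ((2 * m).choose (a + 1) : ℝ) * Real.exp (t * mu (a + 1) m)
      + ((2 * m).choose a : ℝ) * Real.exp (t * mu a m)
      = ((2 * m + 2).choose (a + 2) : ℝ) * Real.exp (t * mu (a + 2) (m + 1))
        * (2 * ((a : ℝ) + 2) * (2 * (m : ℝ) - (a : ℝ)) / ((2 * (m : ℝ) + 2) * (2 * (m : ℝ) + 1))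
            * Real.exp (t * (2 * ((a : ℝ) + 1) * (2 * (m : ℝ) - (a : ℝ) - 1)
                / ((2 * (m : ℝ) - 1) * (2 * (m : ℝ) + 1))))
          + ((a : ℝ) + 2) * ((a : ℝ) + 1) / ((2 * (m : ℝ) + 2) * (2 * (m : ℝ) + 1))
            * Real.exp (t * (-(2 * (2 * (m : ℝ) - (a : ℝ)) * (2 * (m : ℝ) - (a : ℝ) - 1))
                / ((2 * (m : ℝ) - 1) * (2 * (m : ℝ) + 1))))
          + (2 * (m : ℝ) - (a : ℝ)) * (2 * (m : ℝ) - (a : ℝ) - 1)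
              / ((2 * (m : ℝ) + 2) * (2 * (m : ℝ) + 1))
            * Real.exp (t * (-(2 * ((a : ℝ) + 2) * ((a : ℝ) + 1))
                / ((2 * (m : ℝ) - 1) * (2 * (m : ℝ) + 1))))) := by
        rw [hc3, hc1, hc2, e3, e2, e1, Real.exp_neg]
        field_simp
        ring
    _ ≤ ((2 * m + 2).choose (a + 2) : ℝ) * Real.exp (t * mu (a + 2) (m + 1))
        * Real.exp (2 * t ^ 2) := by
        apply mul_le_mul_of_nonneg_left hcore (by positivity)
    _ = ((2 * m + 2).choose (a + 2) : ℝ) * Real.exp (t * mu (a + 2) (m + 1) + 2 * t ^ 2) := by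
        rw [Real.exp_add]; ring



lemma hNN_pos (m : ℕ) : (0:ℝ) < (2 * (m : ℝ) + 2) * (2 * (m : ℝ) + 1) := by
  have : (0:ℝ) ≤ (m : ℝ) := Nat.cast_nonneg m
  nlinarith

lemma hc3 (a m : ℕ) (ha : a ≤ 2 * m) : ((2 * m).choose (a + 2) : ℝ)
      = (2 * (m : ℝ) - a) * (2 * (m : ℝ) - a - 1) / ((2 * (m : ℝ) + 2) * (2 * (m : ℝ) + 1))
        * ((2 * m + 2).choose (a + 2) : ℝ) := by
  rw [div_mul_eq_mul_div, eq_div_iff (hNN_pos m).ne']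
  linear_combination (-1 : ℝ) * R3 a m ha

lemma hc1 (a m : ℕ) (ha : a ≤ 2 * m) : ((2 * m).choose (a + 1) : ℝ)
      = ((a : ℝ) + 2) * (2 * (m : ℝ) - a) / ((2 * (m : ℝ) + 2) * (2 * (m : ℝ) + 1))
        * ((2 * m + 2).choose (a + 2) : ℝ) := by
  rw [div_mul_eq_mul_div, eq_div_iff (hNN_pos m).ne']
  linear_combination (-1 : ℝ) * R1 a m ha

lemma hc2 (a m : ℕ) : ((2 * m).choose a : ℝ)
      = ((a : ℝ) + 2) * ((a : ℝ) + 1) / ((2 * (m : ℝ) + 2) * (2 * (m : ℝ) + 1))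
        * ((2 * m + 2).choose (a + 2) : ℝ) := by
  rw [div_mul_eq_mul_div, eq_div_iff (hNN_pos m).ne']
  linear_combination (-1 : ℝ) * R2 a m

lemma Z_vanish (t : ℝ) {A m : ℕ} (h : 2 * m < A) : Z t A m = 0 := S2_vanish _ h

lemma W_vanish {A m : ℕ} (h : 2 * m < A) : W A m = 0 := S2_vanish _ h

lemma Z_le (t : ℝ) : ∀ m A, Z t A m
    ≤ ((2 * m).choose A : ℝ) * Real.exp (t * mu A m + 2 * (m : ℝ) * t ^ 2) := by
  intro m
  induction m with
  | zero =>
    intro A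
    rcases A with _ | n
    · rw [Z_base, mu_zero]
      rw [show t * 0 + 2 * ((0 : ℕ) : ℝ) * t ^ 2 = 0 from by push_cast; ring, Real.exp_zero]
      norm_num
    · rw [Z_base, Nat.choose_zero_succ]
      norm_num
  | succ m ih =>
    intro A
    rcases A with _ | A
    · rw [Z_zero_succ]
      refine (ih 0).trans ?_
      rw [mu_zero, mu_zero]
      simp only [Nat.choose_zero_right, Nat.cast_one, one_mul]
      apply Real.exp_le_exp.2
      push_cast
      nlinarith [sq_nonneg t]
    rcases A with _ | a
    · -- A = 1
      rw [Z_one_succ]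
      have i0 := ih 0
      have i1 := ih 1
      rw [mu_zero] at i0
      rw [mu_one] at i1
      rw [mu_one]
      rw [Nat.choose_zero_right] at i0
      rw [Nat.choose_one_right] at i1
      push_cast at i0 i1
      rw [one_mul] at i0
      calc 2 * Real.exp t * Z t 0 m + Z t 1 m
          ≤ 2 * Real.exp t * Real.exp (t * 0 + 2 * (m : ℝ) * t ^ 2)
            + 2 * (m : ℝ) * Real.exp (t * 1 + 2 * (m : ℝ) * t ^ 2) := by
            have h1 := mul_le_mul_of_nonneg_left i0
              (by positivity : (0:ℝ) ≤ 2 * Real.exp t)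
            exact add_le_add h1 i1
        _ = (2 * (m : ℝ) + 2) * Real.exp (t * 1 + 2 * (m : ℝ) * t ^ 2) := by
            rw [show t * 0 + 2 * (m : ℝ) * t ^ 2 = 2 * (m : ℝ) * t ^ 2 by ring,
              show t * 1 + 2 * (m : ℝ) * t ^ 2 = t + 2 * (m : ℝ) * t ^ 2 by ring,
              Real.exp_add]
            ring
        _ ≤ (2 * (m : ℝ) + 2) * Real.exp (t * 1 + 2 * ((m + 1 : ℕ) : ℝ) * t ^ 2) := by
            apply mul_le_mul_of_nonneg_left _ (by positivity)
            apply Real.exp_le_exp.2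
            push_cast
            nlinarith [sq_nonneg t]
        _ = ((2 * (m + 1)).choose 1 : ℝ) * Real.exp (t * 1 + 2 * ((m + 1 : ℕ) : ℝ) * t ^ 2) := by
            rw [Nat.choose_one_right]
            push_cast
            ring
    · -- A = a + 2
      rcases Nat.lt_or_ge (2 * (m + 1)) (a + 2) with hbig | hle
      · rw [Z_vanish t hbig]
        positivity
      rcases Nat.eq_zero_or_pos m with rfl | hm
      · have ha0 : a = 0 := by omega
        subst ha0
        rw [Z_two_succ, Z_base, Z_base, Z_base]
        have hmu : mu 2 1 = 0 := by norm_num [mu]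
        norm_num [hmu]
        nlinarith [sq_nonneg t]
      · have ha : a ≤ 2 * m := by omega
        rw [Z_two_succ]
        have i2 := ih (a + 2)
        have i1 := ih (a + 1)
        have i0 := ih a
        calc Z t (a + 2) m + 2 * Real.exp t * Z t (a + 1) m + Z t a m
            ≤ ((2 * m).choose (a + 2) : ℝ) * Real.exp (t * mu (a + 2) m + 2 * (m : ℝ) * t ^ 2)
              + 2 * Real.exp t * (((2 * m).choose (a + 1) : ℝ)
                  * Real.exp (t * mu (a + 1) m + 2 * (m : ℝ) * t ^ 2))
              + ((2 * m).choose a : ℝ) * Real.exp (t * mu a m + 2 * (m : ℝ) * t ^ 2) := by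
              refine add_le_add (add_le_add i2 ?_) i0
              exact mul_le_mul_of_nonneg_left i1 (by positivity)
          _ = (((2 * m).choose (a + 2) : ℝ) * Real.exp (t * mu (a + 2) m)
              + 2 * Real.exp t * ((2 * m).choose (a + 1) : ℝ) * Real.exp (t * mu (a + 1) m)
              + ((2 * m).choose a : ℝ) * Real.exp (t * mu a m))
                * Real.exp (2 * (m : ℝ) * t ^ 2) := by
              rw [Real.exp_add, Real.exp_add, Real.exp_add]
              ring
          _ ≤ (((2 * m + 2).choose (a + 2) : ℝ)
                * Real.exp (t * mu (a + 2) (m + 1) + 2 * t ^ 2))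
                * Real.exp (2 * (m : ℝ) * t ^ 2) :=
              mul_le_mul_of_nonneg_right (key_ineq t a m hm ha) (Real.exp_pos _).le
          _ = ((2 * (m + 1)).choose (a + 2) : ℝ)
                * Real.exp (t * mu (a + 2) (m + 1) + 2 * ((m + 1 : ℕ) : ℝ) * t ^ 2) := by
              rw [show 2 * (m + 1) = 2 * m + 2 from by ring, mul_assoc, ← Real.exp_add]
              congr 2
              push_cast
              ring

lemma W_eq : ∀ m A, W A m = mu A m * ((2 * m).choose A : ℝ) := by
  intro m
  induction m with
  | zero =>
    intro A
    rcases A with _ | n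
    · rw [W_base, mu_zero]
      ring
    · rw [W_base, Nat.choose_zero_succ]
      norm_num
  | succ m ih =>
    intro A
    rcases A with _ | A
    · rw [W_zero_succ, ih 0, mu_zero, mu_zero]
      ring
    rcases A with _ | a
    · rw [W_one_succ, ih 1, ih 0]
      simp only [Nat.zero_add, zero_add, mu_zero, mu_one]
      rw [Nat.choose_zero_right, Nat.choose_one_right, Nat.choose_one_right]
      push_cast
      ring
    · rcases Nat.lt_or_ge (2 * (m + 1)) (a + 2) with hbig | hle
      · rw [W_vanish hbig, Nat.choose_eq_zero_of_lt hbig]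
        norm_num
      rcases Nat.eq_zero_or_pos m with rfl | hm
      · have ha0 : a = 0 := by omega
        subst ha0
        rw [W_two_succ, W_base, W_base, W_base, Nat.choose_zero_succ]
        have hmu : mu 2 1 = 0 := by norm_num [mu]
        rw [hmu]
        norm_num
      · have ha : a ≤ 2 * m := by omega
        rw [W_two_succ, ih (a + 2), ih (a + 1), ih a]
        rw [hc3 a m ha, hc1 a m ha, hc2 a m]
        rw [show 2 * (m + 1) = 2 * m + 2 from by ring]
        rw [← mean_id a m hm]
        push_cast
        ring

lemma sum_exp_eq (t : ℝ) (A m : ℕ) :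
    ∑ X ∈ (Finset.univ.filter fun X : Fin (2 * m) → Bool => cnt (2 * m) X = A),
      Real.exp (t * mis m X) = Z t A m := by
  rw [Finset.sum_filter]
  rfl

lemma tail_upper (A m : ℕ) (t lam : ℝ) (ht : 0 ≤ t) :
    ((((Finset.univ.filter fun X : Fin (2 * m) → Bool => cnt (2 * m) X = A).filter
        fun X => mu A m + lam ≤ (mis m X : ℝ)).card : ℕ) : ℝ)
      ≤ Real.exp (-(t * (mu A m + lam))) * Z t A m := by
  set S := Finset.univ.filter fun X : Fin (2 * m) → Bool => cnt (2 * m) X = A with hS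
  calc (((S.filter fun X => mu A m + lam ≤ (mis m X : ℝ)).card : ℕ) : ℝ)
      = ∑ X ∈ S.filter fun X => mu A m + lam ≤ (mis m X : ℝ), (1 : ℝ) := by
        rw [Finset.sum_const]
        simp
    _ ≤ ∑ X ∈ S.filter fun X => mu A m + lam ≤ (mis m X : ℝ),
          Real.exp (t * (mis m X : ℝ) - t * (mu A m + lam)) := by
        refine Finset.sum_le_sum fun X hX => ?_
        rw [Finset.mem_filter] at hX
        have h2 := hX.2
        apply Real.one_le_exp
        nlinarith [h2]
    _ ≤ ∑ X ∈ S, Real.exp (t * (mis m X : ℝ) - t * (mu A m + lam)) := by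
        apply Finset.sum_le_sum_of_subset_of_nonneg (Finset.filter_subset _ _)
        intro X _ _
        exact (Real.exp_pos _).le
    _ = Real.exp (-(t * (mu A m + lam))) * ∑ X ∈ S, Real.exp (t * (mis m X : ℝ)) := by
        rw [Finset.mul_sum]
        refine Finset.sum_congr rfl fun X _ => ?_
        rw [← Real.exp_add]
        congr 1
        ring
    _ = Real.exp (-(t * (mu A m + lam))) * Z t A m := by rw [sum_exp_eq]

lemma tail_lower (A m : ℕ) (t lam : ℝ) (ht : t ≤ 0) :
    ((((Finset.univ.filter fun X : Fin (2 * m) → Bool => cnt (2 * m) X = A).filter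
        fun X => (mis m X : ℝ) ≤ mu A m - lam).card : ℕ) : ℝ)
      ≤ Real.exp (-(t * (mu A m - lam))) * Z t A m := by
  set S := Finset.univ.filter fun X : Fin (2 * m) → Bool => cnt (2 * m) X = A with hS
  calc (((S.filter fun X => (mis m X : ℝ) ≤ mu A m - lam).card : ℕ) : ℝ)
      = ∑ X ∈ S.filter fun X => (mis m X : ℝ) ≤ mu A m - lam, (1 : ℝ) := by
        rw [Finset.sum_const]
        simp
    _ ≤ ∑ X ∈ S.filter fun X => (mis m X : ℝ) ≤ mu A m - lam,
          Real.exp (t * (mis m X : ℝ) - t * (mu A m - lam)) := by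
        refine Finset.sum_le_sum fun X hX => ?_
        rw [Finset.mem_filter] at hX
        have h2 := hX.2
        apply Real.one_le_exp
        nlinarith [h2]
    _ ≤ ∑ X ∈ S, Real.exp (t * (mis m X : ℝ) - t * (mu A m - lam)) := by
        apply Finset.sum_le_sum_of_subset_of_nonneg (Finset.filter_subset _ _)
        intro X _ _
        exact (Real.exp_pos _).le
    _ = Real.exp (-(t * (mu A m - lam))) * ∑ X ∈ S, Real.exp (t * (mis m X : ℝ)) := by
        rw [Finset.mul_sum]
        refine Finset.sum_congr rfl fun X _ => ?_
        rw [← Real.exp_add]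
        congr 1
        ring
    _ = Real.exp (-(t * (mu A m - lam))) * Z t A m := by rw [sum_exp_eq]

lemma tail_bound (A m : ℕ) (hm : 1 ≤ m) (hA : A ≤ 2 * m) (lam : ℝ) (hlam : 0 ≤ lam)
    (mu0 : ℝ) (hmu0 : mu0 = mu A m) :
    ((((Finset.univ.filter fun X : Fin (2 * m) → Bool => cnt (2 * m) X = A).filter
        fun X => lam ≤ |(mis m X : ℝ) - mu0|).card : ℕ) : ℝ)
      ≤ 2 * ((2 * m).choose A : ℝ) * Real.exp (-lam ^ 2 / (8 * (m : ℝ))) := by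
  subst hmu0
  set S := Finset.univ.filter fun X : Fin (2 * m) → Bool => cnt (2 * m) X = A with hS
  have hm0 : ((m : ℝ)) ≠ 0 := by
    have : (1 : ℝ) ≤ (m : ℝ) := by exact_mod_cast hm
    linarith
  have hmpos : (0 : ℝ) < (m : ℝ) := by
    have : (1 : ℝ) ≤ (m : ℝ) := by exact_mod_cast hm
    linarith
  obtain ⟨t, ht0, hexp_id⟩ : ∃ t : ℝ, 0 ≤ t
      ∧ -(t * lam) + 2 * (m : ℝ) * t ^ 2 = -lam ^ 2 / (8 * (m : ℝ)) :=
    ⟨lam / (4 * (m : ℝ)), by positivity, by field_simp; ring⟩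
  -- upper bound
  have hup : (((S.filter fun X => mu A m + lam ≤ (mis m X : ℝ)).card : ℕ) : ℝ)
      ≤ ((2 * m).choose A : ℝ) * Real.exp (-lam ^ 2 / (8 * (m : ℝ))) := by
    refine (tail_upper A m t lam ht0).trans ?_
    have hZ := Z_le t m A
    calc Real.exp (-(t * (mu A m + lam))) * Z t A m
        ≤ Real.exp (-(t * (mu A m + lam)))
          * (((2 * m).choose A : ℝ) * Real.exp (t * mu A m + 2 * (m : ℝ) * t ^ 2)) :=
          mul_le_mul_of_nonneg_left hZ (Real.exp_pos _).le
      _ = ((2 * m).choose A : ℝ) * Real.exp (-lam ^ 2 / (8 * (m : ℝ))) := by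
          rw [mul_comm, mul_assoc, ← Real.exp_add,
            show (t * mu A m + 2 * (m : ℝ) * t ^ 2) + -(t * (mu A m + lam))
              = -(t * lam) + 2 * (m : ℝ) * t ^ 2 from by ring, hexp_id]
  have hlo : (((S.filter fun X => (mis m X : ℝ) ≤ mu A m - lam).card : ℕ) : ℝ)
      ≤ ((2 * m).choose A : ℝ) * Real.exp (-lam ^ 2 / (8 * (m : ℝ))) := by
    refine (tail_lower A m (-t) lam (by linarith)).trans ?_
    have hZ := Z_le (-t) m A
    calc Real.exp (-(-t * (mu A m - lam))) * Z (-t) A m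
        ≤ Real.exp (-(-t * (mu A m - lam)))
          * (((2 * m).choose A : ℝ) * Real.exp (-t * mu A m + 2 * (m : ℝ) * (-t) ^ 2)) :=
          mul_le_mul_of_nonneg_left hZ (Real.exp_pos _).le
      _ = ((2 * m).choose A : ℝ) * Real.exp (-lam ^ 2 / (8 * (m : ℝ))) := by
          rw [mul_comm, mul_assoc, ← Real.exp_add,
            show (-t * mu A m + 2 * (m : ℝ) * (-t) ^ 2) + -(-t * (mu A m - lam))
              = -(t * lam) + 2 * (m : ℝ) * t ^ 2 from by ring, hexp_id]
  have hsub : (S.filter fun X => lam ≤ |(mis m X : ℝ) - mu A m|)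
      ⊆ (S.filter fun X => mu A m + lam ≤ (mis m X : ℝ))
        ∪ (S.filter fun X => (mis m X : ℝ) ≤ mu A m - lam) := by
    intro X hX
    rw [Finset.mem_filter] at hX
    rcases le_abs.mp hX.2 with h | h
    · exact Finset.mem_union_left _ (Finset.mem_filter.mpr ⟨hX.1, by linarith⟩)
    · exact Finset.mem_union_right _ (Finset.mem_filter.mpr ⟨hX.1, by linarith⟩)
  have hcards : ((S.filter fun X => lam ≤ |(mis m X : ℝ) - mu A m|).card : ℕ)
      ≤ (S.filter fun X => mu A m + lam ≤ (mis m X : ℝ)).card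
        + (S.filter fun X => (mis m X : ℝ) ≤ mu A m - lam).card :=
    le_trans (Finset.card_le_card hsub) (Finset.card_union_le _ _)
  calc (((S.filter fun X => lam ≤ |(mis m X : ℝ) - mu A m|).card : ℕ) : ℝ)
      ≤ (((S.filter fun X => mu A m + lam ≤ (mis m X : ℝ)).card : ℕ) : ℝ)
        + (((S.filter fun X => (mis m X : ℝ) ≤ mu A m - lam).card : ℕ) : ℝ) := by
        exact_mod_cast hcards
    _ ≤ 2 * ((2 * m).choose A : ℝ) * Real.exp (-lam ^ 2 / (8 * (m : ℝ))) := by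
        linarith [hup, hlo]

lemma mu_eq (A B m : ℕ) (hN : A + B = 2 * m) :
    mu A m = (A : ℝ) * B / (((2 * m : ℕ) : ℝ) - 1) := by
  have hB : (B : ℝ) = 2 * (m : ℝ) - A := by
    have := congrArg (Nat.cast (R := ℝ)) hN
    push_cast at this
    linarith
  unfold mu
  rw [hB]
  push_cast
  ring_nf

lemma choose_ne (A B m : ℕ) (hN : A + B = 2 * m) : (((2 * m).choose A : ℕ) : ℝ) ≠ 0 := by
  have : 0 < (2 * m).choose A := Nat.choose_pos (by omega)
  positivity

lemma final_mean (A B m : ℕ) (hN : A + B = 2 * m) :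
    (∑ X ∈ Finset.univ.filter fun X : Fin (2 * m) → Bool => cnt (2 * m) X = A,
        ((mis m X : ℕ) : ℝ)) /
      ((Finset.univ.filter fun X : Fin (2 * m) → Bool => cnt (2 * m) X = A).card : ℝ)
    = (A : ℝ) * B / (((2 * m : ℕ) : ℝ) - 1) := by
  have hsum : (∑ X ∈ Finset.univ.filter fun X : Fin (2 * m) → Bool => cnt (2 * m) X = A,
      ((mis m X : ℕ) : ℝ)) = W A m := by
    rw [Finset.sum_filter]
    rfl
  rw [hsum, W_eq m A, card_S (2 * m) A, ← mu_eq A B m hN]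
  rw [mul_div_assoc, div_self (choose_ne A B m hN), mul_one]

lemma final_tail (A B m : ℕ) (hN : A + B = 2 * m) (lam : ℝ) (hlam : 0 ≤ lam) :
    ((((Finset.univ.filter fun X : Fin (2 * m) → Bool => cnt (2 * m) X = A).filter
        fun X => lam ≤ |((mis m X : ℕ) : ℝ) - (A : ℝ) * B / (((2 * m : ℕ) : ℝ) - 1)|).card : ℕ) : ℝ) /
      ((Finset.univ.filter fun X : Fin (2 * m) → Bool => cnt (2 * m) X = A).card : ℝ)
    ≤ 2 * Real.exp (-lam ^ 2 / (4 * ((2 * m : ℕ) : ℝ))) := by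
  rcases Nat.eq_zero_or_pos m with rfl | hm
  · have hA0 : A = 0 := by omega
    subst hA0
    have hcard : ((Finset.univ.filter fun X : Fin (2 * 0) → Bool => cnt (2 * 0) X = 0).card) = 1 := by
      rw [card_S]
      rfl
    have hle : (((Finset.univ.filter fun X : Fin (2 * 0) → Bool => cnt (2 * 0) X = 0).filter
        fun X => lam ≤ |((mis 0 X : ℕ) : ℝ) - (0 : ℝ) * B / (((2 * 0 : ℕ) : ℝ) - 1)|).card : ℕ) ≤ 1 := by
      rw [← hcard]
      exact Finset.card_filter_le _ _
    have hrhs : 2 * Real.exp (-lam ^ 2 / (4 * ((2 * 0 : ℕ) : ℝ))) = 2 := by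
      norm_num
    rw [hcard, hrhs]
    push_cast
    have : (((Finset.univ.filter fun X : Fin (2 * 0) → Bool => cnt (2 * 0) X = 0).filter
        fun X => lam ≤ |((mis 0 X : ℕ) : ℝ) - (0 : ℝ) * B / (((2 * 0 : ℕ) : ℝ) - 1)|).card : ℝ) ≤ 1 := by
      exact_mod_cast hle
    linarith
  · have hA : A ≤ 2 * m := by omega
    have hmu0 : (A : ℝ) * B / (((2 * m : ℕ) : ℝ) - 1) = mu A m := (mu_eq A B m hN).symm
    have hb := tail_bound A m hm hA lam hlam _ hmu0
    have hCpos : (0 : ℝ) < (((2 * m).choose A : ℕ) : ℝ) := by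
      have : 0 < (2 * m).choose A := Nat.choose_pos hA
      exact_mod_cast this
    rw [card_S (2 * m) A]
    rw [div_le_iff₀ hCpos]
    have hexp : Real.exp (-lam ^ 2 / (8 * (m : ℝ))) = Real.exp (-lam ^ 2 / (4 * ((2 * m : ℕ) : ℝ))) := by
      congr 1
      push_cast
      ring_nf
    calc ((((Finset.univ.filter fun X : Fin (2 * m) → Bool => cnt (2 * m) X = A).filter
        fun X => lam ≤ |((mis m X : ℕ) : ℝ) - (A : ℝ) * B / (((2 * m : ℕ) : ℝ) - 1)|).card : ℕ) : ℝ)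
        ≤ 2 * ((2 * m).choose A : ℝ) * Real.exp (-lam ^ 2 / (8 * (m : ℝ))) := hb
      _ = 2 * Real.exp (-lam ^ 2 / (4 * ((2 * m : ℕ) : ℝ))) * ((2 * m).choose A : ℝ) := by
          rw [hexp]; ring


end
end Stmt15

/-- For a uniformly random binary string with exactly A ones and B zeros,
N = A + B = 2m even, pairing up positions (0,1), (2,3), …, (N-2, N-1), the
number c(X) of mismatched pairs has mean AB/(N-1) and satisfies the tail bound
Pr[|c(X) - AB/(N-1)| ≥ λ] ≤ 2·exp(-λ²/(4N)). -/
theorem stmt_15 (A B m : ℕ) (hN : A + B = 2 * m) :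
    ((∑ X ∈ Finset.univ.filter fun X : Fin (2 * m) → Bool =>
          (Finset.univ.filter fun i => X i = true).card = A,
        ((Finset.univ.filter fun i : Fin m =>
            X ⟨2 * i.1, by have := i.2; omega⟩ ≠
            X ⟨2 * i.1 + 1, by have := i.2; omega⟩).card : ℝ)) /
        ((Finset.univ.filter fun X : Fin (2 * m) → Bool =>
          (Finset.univ.filter fun i => X i = true).card = A).card : ℝ) =
      (A : ℝ) * B / ((2 * m : ℕ) - 1)) ∧
    ∀ lam : ℝ, 0 ≤ lam →
      (((Finset.univ.filter fun X : Fin (2 * m) → Bool =>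
            (Finset.univ.filter fun i => X i = true).card = A).filter fun X =>
          lam ≤ |((Finset.univ.filter fun i : Fin m =>
              X ⟨2 * i.1, by have := i.2; omega⟩ ≠
              X ⟨2 * i.1 + 1, by have := i.2; omega⟩).card : ℝ) -
            (A : ℝ) * B / ((2 * m : ℕ) - 1)|).card : ℝ) /
        ((Finset.univ.filter fun X : Fin (2 * m) → Bool =>
          (Finset.univ.filter fun i => X i = true).card = A).card : ℝ) ≤
      2 * Real.exp (-lam ^ 2 / (4 * (2 * m : ℕ))) := by
  exact ⟨Stmt15.final_mean A B m hN, fun lam hlam => Stmt15.final_tail A B m hN lam hlam⟩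
end

section
/- Let N = A + B > 0 with A ≥ B ≥ 0 and A > B, and let X be a uniformly random binary string with exactly A ones. Let M be the index (position) of the (⌊N/2⌋ + 1)st one of X. Then there is a universal constant d such that for every r ≥ 1, Pr[|M - N²/(2A)| > d·√(rN)] ≤ 2^(-r). -/
open scoped Classical
open Finset

namespace Stmt17

def cntLT (N k : ℕ) (X : Fin N → Bool) : ℕ :=
  (Finset.univ.filter fun i : Fin N => i.1 < k ∧ X i = true).card

def cnt (N : ℕ) (X : Fin N → Bool) : ℕ :=
  (Finset.univ.filter fun i : Fin N => X i = true).card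

def Om (N A : ℕ) : Finset (Fin N → Bool) :=
  Finset.univ.filter fun X => cnt N X = A

variable {N : ℕ}


lemma card_front (k : ℕ) (hk : k ≤ N) :
    (Finset.univ.filter fun i : Fin N => i.1 < k).card = k := by
  rw [← Finset.card_range k]
  apply Finset.card_bij (fun i _ => i.1)
  · intro a ha; simp at ha ⊢; exact ha
  · intro a ha b hb h; exact Fin.ext h
  · intro m hm; simp at hm
    exact ⟨⟨m, lt_of_lt_of_le hm hk⟩, by simp [hm]⟩

lemma card_Sj (A k j : ℕ) (hk : k ≤ N) (hj : j ≤ A) :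
    ((Om N A).filter fun X => cntLT N k X = j).card
      = k.choose j * (N - k).choose (A - j) := by
  classical
  set F : Finset (Fin N) := Finset.univ.filter (fun i : Fin N => i.1 < k) with hF
  set F' : Finset (Fin N) := Finset.univ.filter (fun i : Fin N => ¬ i.1 < k) with hF'
  have hFcard : F.card = k := card_front k hk
  have hF'card : F'.card = N - k := by
    have h1 := Finset.card_filter_add_card_filter_not
      (s := (Finset.univ : Finset (Fin N))) (p := fun i : Fin N => i.1 < k)
    simp only [Finset.card_univ, Fintype.card_fin] at h1
    rw [← hF, ← hF'] at h1
    omega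
  have hprod : ((F.powersetCard j) ×ˢ (F'.powersetCard (A - j))).card
      = k.choose j * (N - k).choose (A - j) := by
    rw [Finset.card_product, Finset.card_powersetCard, Finset.card_powersetCard, hFcard, hF'card]
  rw [← hprod]
  apply Finset.card_bij' (fun X _ => (F.filter fun i => X i = true, F'.filter fun i => X i = true))
    (fun p _ => fun i => decide (i ∈ p.1 ∪ p.2))
  · -- membership forward
    intro X hX
    rw [Finset.mem_filter, Om, Finset.mem_filter] at hX
    simp only [Om, cnt, cntLT, Finset.mem_filter, Finset.mem_univ, true_and] at hX
    obtain ⟨hA, hj'⟩ := hX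
    simp only [Finset.mem_product, Finset.mem_powersetCard]
    have e1 : F.filter (fun i => X i = true) = Finset.univ.filter fun i : Fin N => i.1 < k ∧ X i = true := by
      rw [hF, Finset.filter_filter]
    have hcard1 : (F.filter fun i => X i = true).card = j := by rw [e1]; exact hj'
    refine ⟨⟨Finset.filter_subset _ _, hcard1⟩, ⟨Finset.filter_subset _ _, ?_⟩⟩
    have split := Finset.card_filter_add_card_filter_not
      (s := Finset.univ.filter fun i : Fin N => X i = true) (p := fun i : Fin N => i.1 < k)
    have e2 : (Finset.univ.filter fun i : Fin N => X i = true).filter (fun i => i.1 < k)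
        = F.filter (fun i => X i = true) := by
      rw [hF, Finset.filter_filter, Finset.filter_filter]
      apply Finset.filter_congr; intro i _; tauto
    have e3 : (Finset.univ.filter fun i : Fin N => X i = true).filter (fun i => ¬ i.1 < k)
        = F'.filter (fun i => X i = true) := by
      rw [hF', Finset.filter_filter, Finset.filter_filter]
      apply Finset.filter_congr; intro i _; tauto
    rw [e2, e3, hcard1, hA] at split
    omega
  · -- membership backward
    intro p hp
    simp only [Finset.mem_product, Finset.mem_powersetCard] at hp
    obtain ⟨⟨hs1, hc1⟩, hs2, hc2⟩ := hp
    have hdisj : Disjoint p.1 p.2 := by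
      refine Finset.disjoint_left.2 fun a ha1 ha2 => ?_
      have h1 := hs1 ha1; have h2 := hs2 ha2
      rw [hF] at h1; rw [hF'] at h2
      simp at h1 h2; omega
    rw [Finset.mem_filter, Om, Finset.mem_filter]
    simp only [Om, cnt, cntLT, Finset.mem_filter, Finset.mem_univ, true_and]
    constructor
    · have : (Finset.univ.filter fun i : Fin N => (decide (i ∈ p.1 ∪ p.2)) = true) = p.1 ∪ p.2 := by
        ext i; simp
      rw [this, Finset.card_union_of_disjoint hdisj, hc1, hc2]; omega
    · have : (Finset.univ.filter fun i : Fin N => i.1 < k ∧ (decide (i ∈ p.1 ∪ p.2)) = true) = p.1 := by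
        ext i
        simp only [Finset.mem_filter, Finset.mem_univ, true_and, decide_eq_true_iff,
          Finset.mem_union]
        constructor
        · rintro ⟨hik, hi | hi⟩
          · exact hi
          · exfalso; have := hs2 hi; rw [hF'] at this; simp at this; omega
        · intro hi
          have := hs1 hi; rw [hF] at this; simp at this
          exact ⟨this, Or.inl hi⟩
      rw [this, hc1]
  · -- left inverse
    intro X hX
    funext i
    have : (i ∈ F.filter (fun i => X i = true) ∪ F'.filter (fun i => X i = true)) ↔ X i = true := by
      simp only [Finset.mem_union, Finset.mem_filter, hF, hF', Finset.mem_univ, true_and]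
      tauto
    by_cases h : X i = true
    · simp [this, h]
    · simp only [Bool.not_eq_true] at h; simp [this, h]
  · -- right inverse
    intro p hp
    simp only [Finset.mem_product, Finset.mem_powersetCard] at hp
    obtain ⟨⟨hs1, hc1⟩, hs2, hc2⟩ := hp
    have key : ∀ i : Fin N, (decide (i ∈ p.1 ∪ p.2) = true) ↔ i ∈ p.1 ∪ p.2 := by
      intro i; simp
    ext i <;> simp only [Finset.mem_filter, decide_eq_true_iff, Finset.mem_union]
    · constructor
      · rintro ⟨hiF, hi | hi⟩
        · exact hi
        · exfalso; have h2 := hs2 hi; rw [hF'] at h2; rw [hF] at hiF; simp at h2 hiF; omega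
      · intro hi; exact ⟨hs1 hi, Or.inl hi⟩
    · constructor
      · rintro ⟨hiF, hi | hi⟩
        · exfalso; have h2 := hs1 hi; rw [hF] at h2; rw [hF'] at hiF; simp at h2 hiF; omega
        · exact hi
      · intro hi; exact ⟨hs2 hi, Or.inr hi⟩



lemma cntLT_top (X : Fin N → Bool) : cntLT N N X = cnt N X := by
  unfold cntLT cnt; congr 1
  apply Finset.filter_congr; intro i _; simp [i.isLt]

lemma card_Om (A : ℕ) (hA : A ≤ N) : (Om N A).card = N.choose A := by
  have h := card_Sj (N := N) A N A le_rfl le_rfl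
  have e : (Om N A).filter (fun X => cntLT N N X = A) = Om N A := by
    apply Finset.filter_true_of_mem
    intro X hX
    simp only [Om, Finset.mem_filter] at hX
    rw [cntLT_top]; exact hX.2
  rw [e] at h
  simpa using h

lemma ratio_identity (A k j : ℕ) (hk : k ≤ N) (hjA : j < A) (hjk : j < k) :
    (k.choose j * (N-k).choose (A-j) : ℝ) * (((k:ℝ)-j)*((A:ℝ)-j))
      = (k.choose (j+1) * (N-k).choose (A-(j+1)) : ℝ)
        * (((j:ℝ)+1)*((N:ℝ)-k-A+j+1)) := by
  by_cases hcase : A - j - 1 ≤ N - k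
  · have c1 := Nat.choose_succ_right_eq k j
    have c2 := Nat.choose_succ_right_eq (N-k) (A-j-1)
    have hAj : A - j - 1 + 1 = A - j := by omega
    rw [hAj] at c2
    have c1' : (k.choose (j+1) : ℝ) * ((j:ℝ)+1) = (k.choose j : ℝ) * ((k:ℝ) - j) := by
      have := congrArg (fun n : ℕ => (n : ℝ)) c1
      push_cast at this
      rw [Nat.cast_sub hjk.le] at this
      push_cast at this
      linarith [this]
    have c2' : ((N-k).choose (A-j) : ℝ) * ((A:ℝ) - j) = ((N-k).choose (A-(j+1)) : ℝ) * ((N:ℝ)-k-A+j+1) := by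
      have := congrArg (fun n : ℕ => (n : ℝ)) c2
      push_cast [Nat.cast_sub hcase, Nat.cast_sub hk, Nat.cast_sub hjA.le,
        Nat.cast_sub (by omega : j + 1 ≤ A), Nat.cast_sub (by omega : 1 ≤ A - j)] at this
      have e2 : A - (j+1) = A - j - 1 := by omega
      rw [e2]
      push_cast [Nat.cast_sub (by omega : 1 ≤ A - j), Nat.cast_sub hjA.le, Nat.cast_sub hk]
      linarith [this]
    linear_combination (-(((N-k).choose (A-j) : ℝ))*((A:ℝ)-(j:ℝ))) * c1' + (((k.choose (j+1) : ℝ))*((j:ℝ)+1)) * c2'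
  · have h1 : (N - k) < A - j := by omega
    have h2 : (N - k) < A - (j+1) := by omega
    rw [Nat.choose_eq_zero_of_lt h1, Nat.choose_eq_zero_of_lt h2]
    simp

set_option maxHeartbeats 1000000 in
lemma ratio_exp (A k j : ℕ) (hA : A ≤ N) (hk : k ≤ N) (hN : 0 < N)
    (hj : (j:ℝ) + 4 ≤ (k:ℝ)*A/N) :
    (k.choose j * (N-k).choose (A-j) : ℝ)
      ≤ (k.choose (j+1) * (N-k).choose (A-(j+1)) : ℝ)
        * Real.exp (-(((k:ℝ)*A/N - j - 4)/N)) := by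
  have hNr : (0:ℝ) < N := by exact_mod_cast hN
  have hμk : (k:ℝ)*A/N ≤ k := by
    rw [div_le_iff₀ hNr]
    have : (A:ℝ) ≤ N := by exact_mod_cast hA
    nlinarith [Nat.cast_nonneg (α := ℝ) k]
  have hμA : (k:ℝ)*A/N ≤ A := by
    rw [div_le_iff₀ hNr]
    have : (k:ℝ) ≤ N := by exact_mod_cast hk
    nlinarith [Nat.cast_nonneg (α := ℝ) A]
  have hjk : j < k := by
    have : (j:ℝ) < k := by linarith
    exact_mod_cast this
  have hjA : j < A := by
    have : (j:ℝ) < A := by linarith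
    exact_mod_cast this
  set Tj := (k.choose j * (N-k).choose (A-j) : ℝ) with hTj
  set Tj1 := (k.choose (j+1) * (N-k).choose (A-(j+1)) : ℝ) with hTj1
  set D := ((k:ℝ)-j)*((A:ℝ)-j) with hD
  set Nu := ((j:ℝ)+1)*((N:ℝ)-k-A+j+1) with hNu
  have hid : Tj * D = Tj1 * Nu := ratio_identity A k j hk hjA hjk
  set x := (k:ℝ)*A/N - j - 4 with hx
  have hx0 : 0 ≤ x := by simp [hx]; linarith
  have hD0 : 0 < D := by
    apply mul_pos <;> · simp; exact_mod_cast (by assumption : _ < _)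
  have hkey : Nu ≤ D - (N:ℝ) * x := by
    have hjr : (j:ℝ) < A := by exact_mod_cast hjA
    have hAr : (A:ℝ) ≤ N := by exact_mod_cast hA
    have hkr : (k:ℝ) ≤ N := by exact_mod_cast hk
    have hmul : (N:ℝ) * ((k:ℝ)*A/N) = (k:ℝ)*A := by field_simp
    simp only [hNu, hD, hx]
    nlinarith [hmul]
  have hTj10 : (0:ℝ) ≤ Tj1 := by positivity
  have hTj0 : (0:ℝ) ≤ Tj := by positivity
  rcases eq_or_lt_of_le hTj10 with h0 | hpos
  · have : Tj * D = 0 := by rw [hid, ← h0]; ring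
    have : Tj = 0 := by
      rcases mul_eq_zero.1 this with h | h
      · exact h
      · exact absurd h (ne_of_gt hD0)
    rw [this, ← h0]
    positivity
  · rcases le_or_gt Nu 0 with hNu0 | hNupos
    · have : Tj * D ≤ 0 := by rw [hid]; exact mul_nonpos_of_nonneg_of_nonpos hpos.le hNu0
      have hTjneg : Tj ≤ 0 := by nlinarith
      calc Tj ≤ 0 := hTjneg
        _ ≤ _ := by positivity
    · have hTjeq : Tj = Tj1 * (Nu / D) := by
        field_simp
        linarith [hid]
      rw [hTjeq]
      apply mul_le_mul_of_nonneg_left _ hpos.le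
      have hDN : D ≤ (N:ℝ) * N := by
        have h1 : (k:ℝ) - j ≤ N := by
          have : (k:ℝ) ≤ N := by exact_mod_cast hk
          have : (0:ℝ) ≤ j := Nat.cast_nonneg j
          linarith
        have h2 : (A:ℝ) - j ≤ N := by
          have : (A:ℝ) ≤ N := by exact_mod_cast hA
          have : (0:ℝ) ≤ j := Nat.cast_nonneg j
          linarith
        have h4 : (0:ℝ) ≤ (A:ℝ) - j := by
          have : (j:ℝ) ≤ A := by exact_mod_cast hjA.le
          linarith
        rw [hD]
        exact mul_le_mul h1 h2 h4 (Nat.cast_nonneg N)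
      have step1 : Nu / D ≤ 1 - (N:ℝ)*x/D := by
        rw [div_le_iff₀ hD0, sub_mul, div_mul_cancel₀ _ (ne_of_gt hD0)]
        linarith
      have step2 : (1:ℝ) - (N:ℝ)*x/D ≤ Real.exp (-((N:ℝ)*x/D)) := by
        linarith [Real.add_one_le_exp (-((N:ℝ)*x/D))]
      have step3 : Real.exp (-((N:ℝ)*x/D)) ≤ Real.exp (-(x/N)) := by
        apply Real.exp_le_exp.2
        rw [neg_le_neg_iff, div_le_div_iff₀ hNr hD0]
        linarith [mul_le_mul_of_nonneg_left hDN hx0]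
      linarith



lemma one_sub_exp_neg (x : ℝ) (hx0 : 0 < x) (hx1 : x ≤ 1) :
    x / 2 ≤ 1 - Real.exp (-x) := by
  have h1 : Real.exp (-x) ≤ 1 / (1 + x) := by
    rw [le_div_iff₀ (by linarith)]
    have := Real.add_one_le_exp x
    have hex : 0 < Real.exp x := Real.exp_pos x
    rw [Real.exp_neg]
    rw [inv_mul_eq_div, div_le_one hex]
    linarith
  have h2 : 1 / (1 + x) ≤ 1 - x/2 := by
    rw [div_le_iff₀ (by linarith)]
    nlinarith
  linarith

set_option maxHeartbeats 1000000 in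
lemma tail_abstract (T : ℕ → ℝ) (Cc : ℝ) (N b : ℕ) (μ Δ : ℝ)
    (hT0 : ∀ j, 0 ≤ T j)
    (hN : 0 < N) (hΔ16 : 16 ≤ Δ) (hΔN : Δ ≤ N)
    (hμb : (b:ℝ) + Δ ≤ μ)
    (hratio : ∀ j : ℕ, (j:ℝ) + 4 ≤ μ → T j ≤ T (j+1) * Real.exp (-((μ - j - 4)/N)))
    (hblock : ∀ m n : ℕ, (∑ j ∈ Finset.Icc m n, T j) ≤ Cc) :
    (∑ j ∈ Finset.Icc 0 b, T j) ≤ (32*N/Δ^2) * Real.exp (-(Δ^2/(16*N))) * Cc := by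
  have hNr : (0:ℝ) < N := by exact_mod_cast hN
  have hCc0 : 0 ≤ Cc := le_trans (by simpa using hT0 0) (hblock 0 0)
  set q : ℝ := Real.exp (-(Δ/(2*N))) with hq
  have hq0 : 0 < q := Real.exp_pos _
  have hq1 : q < 1 := by
    rw [hq, Real.exp_lt_one_iff]
    have : 0 < Δ / (2*N) := by positivity
    linarith
  -- single step bound valid whenever j+4+Δ/2 ≤ μ  (gap at least Δ/2)
  have step : ∀ j : ℕ, (j:ℝ) + 4 + Δ/2 ≤ μ → T j ≤ T (j+1) * q := by
    intro j hjv
    refine le_trans (hratio j (by linarith)) ?_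
    apply mul_le_mul_of_nonneg_left _ (hT0 (j+1))
    apply Real.exp_le_exp.2
    rw [neg_le_neg_iff, div_le_div_iff₀ (by positivity) hNr]
    nlinarith
  -- monotonicity step
  have mono : ∀ j : ℕ, (j:ℝ) + 4 ≤ μ → T j ≤ T (j+1) := by
    intro j hjv
    refine le_trans (hratio j hjv) ?_
    have : Real.exp (-((μ - j - 4)/N)) ≤ 1 := by
      rw [Real.exp_le_one_iff]
      have : 0 ≤ (μ - j - 4)/N := by
        apply div_nonneg _ hNr.le
        linarith
      linarith
    nlinarith [hT0 (j+1)]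
  -- geometric decay below b
  have geom : ∀ t : ℕ, t ≤ b → T (b - t) ≤ q^t * T b := by
    intro t
    induction t with
    | zero => intro _; simp
    | succ t ih =>
      intro ht
      have h1 : T (b - (t+1)) ≤ T (b - (t+1) + 1) * q := by
        apply step
        have : ((b - (t+1) : ℕ):ℝ) ≤ (b:ℝ) := by
          exact_mod_cast Nat.sub_le b (t+1)
        have h4 : (4:ℝ) + Δ/2 ≤ Δ := by linarith
        linarith
      have e : b - (t+1) + 1 = b - t := by omega
      rw [e] at h1
      calc T (b - (t+1)) ≤ T (b - t) * q := h1
        _ ≤ (q^t * T b) * q := by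
            apply mul_le_mul_of_nonneg_right (ih (by omega)) hq0.le
        _ = q^(t+1) * T b := by ring
  have hTb0 := hT0 b
  -- sum over Icc 0 b
  have sum_geom : (∑ j ∈ Finset.Icc 0 b, T j) ≤ T b * (1 / (1-q)) := by
    have e1 : Finset.Icc 0 b = Finset.range (b+1) := by
      ext x; simp [Nat.lt_succ_iff]
    rw [e1]
    have e2 : (∑ j ∈ Finset.range (b+1), T j) = ∑ t ∈ Finset.range (b+1), T (b - t) := by
      rw [← Finset.sum_range_reflect]
      simp
    rw [e2]
    calc (∑ t ∈ Finset.range (b+1), T (b - t))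
        ≤ ∑ t ∈ Finset.range (b+1), q^t * T b := by
          apply Finset.sum_le_sum
          intro t ht
          simp only [Finset.mem_range, Nat.lt_succ_iff] at ht
          exact geom t ht
      _ = (∑ t ∈ Finset.range (b+1), q^t) * T b := by rw [Finset.sum_mul]
      _ ≤ (1/(1-q)) * T b := by
          apply mul_le_mul_of_nonneg_right _ hTb0
          have hgs : (∑ t ∈ Finset.range (b+1), q^t) = (1 - q^(b+1))/(1-q) := by
            rw [geom_sum_eq (ne_of_lt hq1)]
            rw [show q - 1 = -(1-q) by ring]
            rw [show q^(b+1) - 1 = -(1 - q^(b+1)) by ring]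
            rw [neg_div_neg_eq]
          rw [hgs]
          apply div_le_div_of_nonneg_right _ (by linarith)
          · have : 0 ≤ q^(b+1) := by positivity
            linarith
      _ = T b * (1/(1-q)) := by ring
  -- telescoping above b
  set s : ℕ := ⌊Δ/4⌋₊ with hs
  have hs_le : (s:ℝ) ≤ Δ/4 := Nat.floor_le (by positivity)
  have hs_ge : Δ/8 ≤ (s:ℝ) := by
    have h := Nat.sub_one_lt_floor (Δ/4)
    rw [← hs] at h
    linarith
  have hs1 : 1 ≤ s := by
    have : (1:ℝ) ≤ (s:ℝ) := by linarith
    exact_mod_cast this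
  have tele : ∀ t : ℕ, t ≤ s → T b ≤ Real.exp (-((t:ℝ) * (Δ/(2*N)))) * T (b + t) := by
    intro t
    induction t with
    | zero => intro _; simp
    | succ t ih =>
      intro ht
      have h1 : T (b + t) ≤ T (b + t + 1) * q := by
        apply step
        have htr : (t:ℝ) ≤ (s:ℝ) - 1 := by
          have : (t:ℝ) + 1 ≤ (s:ℝ) := by exact_mod_cast ht
          linarith
        push_cast
        linarith
      calc T b ≤ Real.exp (-((t:ℝ) * (Δ/(2*N)))) * T (b + t) := ih (by omega)
        _ ≤ Real.exp (-((t:ℝ) * (Δ/(2*N)))) * (T (b + t + 1) * q) := by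
            apply mul_le_mul_of_nonneg_left h1 (Real.exp_pos _).le
        _ = (Real.exp (-((t:ℝ) * (Δ/(2*N)))) * Real.exp (-(Δ/(2*N)))) * T (b + (t+1)) := by
            rw [hq]; ring
        _ = Real.exp (-(((t+1:ℕ):ℝ) * (Δ/(2*N)))) * T (b + (t+1)) := by
            rw [← Real.exp_add]; congr 1; push_cast; ring
  have anchor_mono : ∀ t : ℕ, t ≤ s - 1 → T (b+s) ≤ T (b+s+t) := by
    intro t
    induction t with
    | zero => intro _; simp
    | succ t ih =>
      intro ht
      refine le_trans (ih (by omega)) ?_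
      have : T (b+s+t) ≤ T (b+s+t+1) := by
        apply mono
        have h1 : (t:ℝ) ≤ (s:ℝ) - 1 - 1 := by
          have h2 : t + 2 ≤ s := by omega
          have : (t:ℝ) + 2 ≤ (s:ℝ) := by exact_mod_cast h2
          linarith
        push_cast
        linarith
      simpa [Nat.add_assoc] using this
  have block : (s:ℝ) * T (b+s) ≤ Cc := by
    have hcard : (Finset.Icc (b+s) (b+s+(s-1))).card = s := by
      rw [Nat.card_Icc]; omega
    have hle : ∀ j ∈ Finset.Icc (b+s) (b+s+(s-1)), T (b+s) ≤ T j := by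
      intro j hj
      simp only [Finset.mem_Icc] at hj
      have e : j = b + s + (j - (b+s)) := by omega
      rw [e]
      exact anchor_mono (j - (b+s)) (by omega)
    have h := Finset.card_nsmul_le_sum (Finset.Icc (b+s) (b+s+(s-1))) T (T (b+s)) hle
    rw [hcard, nsmul_eq_mul] at h
    exact le_trans h (hblock _ _)
  have hTbs0 := hT0 (b+s)
  have hanchor : T (b+s) ≤ 8*Cc/Δ := by
    have hsr : (0:ℝ) < (s:ℝ) := by linarith
    have h1 : T (b+s) ≤ Cc / s := by
      rw [le_div_iff₀ hsr]
      linarith [block]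
    refine le_trans h1 ?_
    rw [div_le_div_iff₀ hsr (by linarith : (0:ℝ) < Δ)]
    nlinarith
  have hTb_bound : T b ≤ Real.exp (-(Δ^2/(16*N))) * T (b+s) := by
    have h1 := tele s le_rfl
    refine le_trans h1 ?_
    apply mul_le_mul_of_nonneg_right _ hTbs0
    apply Real.exp_le_exp.2
    rw [neg_le_neg_iff]
    rw [div_le_iff₀ (by positivity : (0:ℝ) < 16*(N:ℝ))]
    have expand : (s:ℝ) * (Δ/(2*N)) * (16*N) = 8*(s:ℝ)*Δ := by
      field_simp; ring
    rw [expand]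
    nlinarith
  have hq2 : (0:ℝ) < 1 - q := by linarith
  have hΔ0 : (0:ℝ) < Δ := by linarith
  have hfrac : 1/(1-q) ≤ 4*(N:ℝ)/Δ := by
    have hx : Δ/(4*(N:ℝ)) ≤ 1 - q := by
      have h := one_sub_exp_neg (Δ/(2*N)) (by positivity) (by
        rw [div_le_one (by positivity)]
        linarith)
      rw [← hq] at h
      have e : Δ/(2*(N:ℝ))/2 = Δ/(4*N) := by ring
      rw [e] at h
      exact h
    rw [div_le_div_iff₀ hq2 hΔ0]
    have h2 : 4*(N:ℝ)*(Δ/(4*N)) ≤ 4*(N:ℝ)*(1-q) :=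
      mul_le_mul_of_nonneg_left hx (by positivity)
    have e : 4*(N:ℝ)*(Δ/(4*N)) = Δ := by field_simp
    linarith
  have hexp0 : (0:ℝ) ≤ Real.exp (-(Δ^2/(16*(N:ℝ)))) := (Real.exp_pos _).le
  have hstep : T b ≤ Real.exp (-(Δ^2/(16*(N:ℝ)))) * (8*Cc/Δ) :=
    le_trans hTb_bound (mul_le_mul_of_nonneg_left hanchor hexp0)
  calc (∑ j ∈ Finset.Icc 0 b, T j) ≤ T b * (1/(1-q)) := sum_geom
    _ ≤ (Real.exp (-(Δ^2/(16*(N:ℝ)))) * (8*Cc/Δ)) * (4*(N:ℝ)/Δ) := by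
        apply mul_le_mul hstep hfrac (one_div_pos.2 hq2).le
        apply mul_nonneg hexp0
        apply div_nonneg (by linarith) hΔ0.le
    _ = (32*(N:ℝ)/Δ^2) * Real.exp (-(Δ^2/(16*(N:ℝ)))) * Cc := by
        field_simp; ring

lemma fiber_sum (A k m n : ℕ) :
    (∑ j ∈ Finset.Icc m n, ((Om N A).filter fun X => cntLT N k X = j).card)
      = ((Om N A).filter fun X => m ≤ cntLT N k X ∧ cntLT N k X ≤ n).card := by
  rw [Finset.card_eq_sum_card_fiberwise
    (f := fun X => cntLT N k X) (t := Finset.Icc m n) (by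
      intro x hx
      simp only [Finset.mem_coe, Finset.mem_filter] at hx
      simp only [Finset.mem_coe, Finset.mem_Icc]
      exact hx.2)]
  apply Finset.sum_congr rfl
  intro j hj
  simp only [Finset.mem_Icc] at hj
  congr 1
  rw [Finset.filter_filter]
  apply Finset.filter_congr
  intro X _
  constructor
  · intro h; exact ⟨by omega, by omega⟩
  · rintro ⟨h1, h2⟩; omega

lemma count_tail (A k b : ℕ) (hk : k ≤ N) (hA : A ≤ N) (hN : 0 < N) (Δ : ℝ)
    (hΔ16 : 16 ≤ Δ) (hΔN : Δ ≤ N) (hμb : (b:ℝ) + Δ ≤ (k:ℝ)*A/N) :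
    (((Om N A).filter fun X => cntLT N k X ≤ b).card : ℝ)
      ≤ (32*N/Δ^2) * Real.exp (-(Δ^2/(16*N))) * ((Om N A).card : ℝ) := by
  have hNr : (0:ℝ) < N := by exact_mod_cast hN
  set T : ℕ → ℝ := fun j => (((Om N A).filter fun X => cntLT N k X = j).card : ℝ) with hT
  have hT0 : ∀ j, 0 ≤ T j := fun j => Nat.cast_nonneg _
  have hμA : (k:ℝ)*A/N ≤ A := by
    rw [div_le_iff₀ hNr]
    have h1 : (k:ℝ) ≤ N := by exact_mod_cast hk
    nlinarith [Nat.cast_nonneg (α := ℝ) A]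
  have hratio : ∀ j : ℕ, (j:ℝ) + 4 ≤ (k:ℝ)*A/N →
      T j ≤ T (j+1) * Real.exp (-((((k:ℝ)*A/N) - j - 4)/N)) := by
    intro j hj
    have hjA : j + 4 ≤ A := by
      have : (j:ℝ) + 4 ≤ (A:ℝ) := by linarith
      exact_mod_cast this
    have e1 : T j = (k.choose j * (N-k).choose (A-j) : ℝ) := by
      rw [hT]; simp only; rw [card_Sj A k j hk (by omega)]; push_cast; ring
    have e2 : T (j+1) = (k.choose (j+1) * (N-k).choose (A-(j+1)) : ℝ) := by
      rw [hT]; simp only; rw [card_Sj A k (j+1) hk (by omega)]; push_cast; ring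
    rw [e1, e2]
    exact ratio_exp A k j hA hk hN hj
  have hblock : ∀ m n : ℕ, (∑ j ∈ Finset.Icc m n, T j) ≤ ((Om N A).card : ℝ) := by
    intro m n
    have h1 : (∑ j ∈ Finset.Icc m n, T j)
        = ((((Om N A).filter fun X => m ≤ cntLT N k X ∧ cntLT N k X ≤ n).card : ℕ) : ℝ) := by
      rw [hT]
      rw [← Nat.cast_sum]
      exact_mod_cast congrArg (fun x : ℕ => (x:ℝ)) (fiber_sum (N:=N) A k m n)
    rw [h1]
    exact_mod_cast Finset.card_le_card (Finset.filter_subset _ _)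
  have hmain := tail_abstract T ((Om N A).card : ℝ) N b ((k:ℝ)*A/N) Δ hT0 hN hΔ16 hΔN hμb hratio hblock
  have e : ((Om N A).filter fun X => cntLT N k X ≤ b)
      = ((Om N A).filter fun X => 0 ≤ cntLT N k X ∧ cntLT N k X ≤ b) := by
    apply Finset.filter_congr; intro X _; simp
  rw [e]
  have h2 : (∑ j ∈ Finset.Icc 0 b, T j)
      = ((((Om N A).filter fun X => 0 ≤ cntLT N k X ∧ cntLT N k X ≤ b).card : ℕ) : ℝ) := by
    rw [hT, ← Nat.cast_sum]
    exact_mod_cast congrArg (fun x : ℕ => (x:ℝ)) (fiber_sum (N:=N) A k 0 b)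
  rw [← h2]
  exact hmain


lemma cnt_rev (X : Fin N → Bool) : cnt N (fun i => X i.rev) = cnt N X := by
  unfold cnt
  apply Finset.card_bij (fun i _ => i.rev)
  · intro a ha; simp at ha ⊢; exact ha
  · intro a _ b _ h
    have := congrArg Fin.rev h
    simpa [Fin.rev_rev] using this
  · intro b hb
    simp at hb
    exact ⟨b.rev, by simp [Fin.rev_rev, hb], by simp [Fin.rev_rev]⟩

lemma rev_split (k : ℕ) (hk : k ≤ N) (X : Fin N → Bool) :
    cntLT N k (fun i => X i.rev) + cntLT N (N - k) X = cnt N X := by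
  have h1 : cntLT N k (fun i => X i.rev)
      = (Finset.univ.filter fun i : Fin N => ¬ i.1 < N - k ∧ X i = true).card := by
    unfold cntLT
    apply Finset.card_bij (fun i _ => i.rev)
    · intro a ha
      simp only [Finset.mem_filter, Finset.mem_univ, true_and] at ha ⊢
      obtain ⟨h1, h2⟩ := ha
      refine ⟨?_, h2⟩
      have := a.isLt
      simp only [Fin.val_rev]
      omega
    · intro a _ b _ h
      have := congrArg Fin.rev h
      simpa [Fin.rev_rev] using this
    · intro b hb
      simp only [Finset.mem_filter, Finset.mem_univ, true_and] at hb
      obtain ⟨h1, h2⟩ := hb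
      refine ⟨b.rev, ?_, by simp [Fin.rev_rev]⟩
      simp only [Finset.mem_filter, Finset.mem_univ, true_and, Fin.rev_rev, Fin.val_rev]
      have := b.isLt
      exact ⟨by omega, h2⟩
  rw [h1]
  unfold cntLT cnt
  have h2 := Finset.card_filter_add_card_filter_not
    (s := Finset.univ.filter fun i : Fin N => X i = true) (p := fun i : Fin N => i.1 < N - k)
  rw [Finset.filter_filter, Finset.filter_filter] at h2
  have e1 : (Finset.univ.filter fun i : Fin N => X i = true ∧ i.1 < N - k)
      = (Finset.univ.filter fun i : Fin N => i.1 < N - k ∧ X i = true) := by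
    apply Finset.filter_congr; intro i _; tauto
  have e2 : (Finset.univ.filter fun i : Fin N => X i = true ∧ ¬ i.1 < N - k)
      = (Finset.univ.filter fun i : Fin N => ¬ i.1 < N - k ∧ X i = true) := by
    apply Finset.filter_congr; intro i _; tauto
  rw [e1, e2] at h2
  omega

lemma cntLT_le_cnt (k : ℕ) (X : Fin N → Bool) : cntLT N k X ≤ cnt N X := by
  apply Finset.card_le_card
  intro i hi
  simp only [Finset.mem_filter] at hi ⊢
  exact ⟨hi.1, hi.2.2⟩

lemma cntLT_mono (k k' : ℕ) (hkk : k ≤ k') (X : Fin N → Bool) : cntLT N k X ≤ cntLT N k' X := by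
  apply Finset.card_le_card
  intro i hi
  simp only [Finset.mem_filter] at hi ⊢
  exact ⟨hi.1, lt_of_lt_of_le hi.2.1 hkk, hi.2.2⟩

lemma count_rev (A k c : ℕ) (hk : k ≤ N) (hc : c ≤ A) :
    ((Om N A).filter fun X => c ≤ cntLT N k X).card
      = ((Om N A).filter fun X => cntLT N (N - k) X ≤ A - c).card := by
  apply Finset.card_bij (fun X _ => fun i : Fin N => X i.rev)
  · intro X hX
    simp only [Finset.mem_filter, Om, Finset.mem_univ, true_and] at hX ⊢
    obtain ⟨hA, hcX⟩ := hX
    have hOm : cnt N (fun i => X i.rev) = A := by rw [cnt_rev]; exact hA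
    refine ⟨hOm, ?_⟩
    have hsplit := rev_split k hk (fun i : Fin N => X i.rev)
    have erev : (fun i : Fin N => X i.rev.rev) = X := by funext i; rw [Fin.rev_rev]
    simp only [erev] at hsplit
    rw [hOm] at hsplit
    omega
  · intro X _ X' _ h
    funext i
    have := congrFun h i.rev
    simpa [Fin.rev_rev] using this
  · intro Y hY
    simp only [Finset.mem_filter, Om, Finset.mem_univ, true_and] at hY
    obtain ⟨hA, hcY⟩ := hY
    refine ⟨fun i : Fin N => Y i.rev, ?_, ?_⟩
    · simp only [Finset.mem_filter, Om, Finset.mem_univ, true_and]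
      have hOm : cnt N (fun i => Y i.rev) = A := by rw [cnt_rev]; exact hA
      refine ⟨hOm, ?_⟩
      have hsplit := rev_split k hk Y
      rw [hA] at hsplit
      have hle := cntLT_le_cnt (N := N) (N - k) Y
      rw [hA] at hle
      omega
    · funext i; exact congrArg Y (Fin.rev_rev i)

lemma M_le (A : ℕ) (hAN : A ≤ N) (h2A : N < 2*A) (X : Fin N → Bool) (hX : X ∈ Om N A) :
    sInf {k : ℕ | N / 2 + 1 ≤ cntLT N k X} ≤ N := by
  apply Nat.sInf_le
  have hc : cntLT N N X = A := by
    rw [cntLT_top]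
    simpa [Om] using hX
  simp only [Set.mem_setOf_eq, hc]
  omega

lemma M_mem (A : ℕ) (hAN : A ≤ N) (h2A : N < 2*A) (X : Fin N → Bool) (hX : X ∈ Om N A) :
    sInf {k : ℕ | N / 2 + 1 ≤ cntLT N k X} ∈ {k : ℕ | N / 2 + 1 ≤ cntLT N k X} := by
  apply Nat.sInf_mem
  refine ⟨N, ?_⟩
  have hc : cntLT N N X = A := by
    rw [cntLT_top]
    simpa [Om] using hX
  simp only [Set.mem_setOf_eq, hc]
  omega

end Stmt17

open Stmt17 in
set_option maxHeartbeats 2000000 in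
/-- Concentration of the position M of the (⌊N/2⌋+1)st one of a uniformly
random binary string of length N = A + B with exactly A ones (A > B): there
is a universal constant d > 0 such that for every r ≥ 1,
Pr[|M - N²/(2A)| > d·√(rN)] ≤ 2^(-r). Here M is the least k such that the
first k positions contain ⌊N/2⌋ + 1 ones. -/
theorem stmt_17 :
    ∃ d : ℝ, 0 < d ∧ ∀ A B : ℕ, B < A → ∀ r : ℝ, 1 ≤ r →
      (((Finset.univ.filter fun X : Fin (A + B) → Bool =>
            (Finset.univ.filter fun i => X i = true).card = A).filter fun X =>
          d * Real.sqrt (r * (A + B : ℕ)) <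
            |((sInf {k : ℕ | (A + B) / 2 + 1 ≤
                (Finset.univ.filter fun i : Fin (A + B) =>
                  i.1 < k ∧ X i = true).card} : ℕ) : ℝ) -
              ((A + B : ℕ) : ℝ) ^ 2 / (2 * A)|).card : ℝ) /
        ((Finset.univ.filter fun X : Fin (A + B) → Bool =>
          (Finset.univ.filter fun i => X i = true).card = A).card : ℝ) ≤
      (2 : ℝ) ^ (-r) := by
  refine ⟨100, by norm_num, ?_⟩
  intro A B hBA r hr
  show (((Om (A+B) A).filter fun X =>
          (100:ℝ) * Real.sqrt (r * ((A + B : ℕ) : ℝ)) <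
            |((sInf {k : ℕ | (A + B) / 2 + 1 ≤ cntLT (A+B) k X} : ℕ) : ℝ) -
              ((A + B : ℕ) : ℝ) ^ 2 / (2 * A)|).card : ℝ) /
        ((Om (A+B) A).card : ℝ) ≤ (2 : ℝ) ^ (-r)
  set N := A + B with hNdef
  have hA1 : 1 ≤ A := by omega
  have hAN : A ≤ N := by omega
  have hN0 : 0 < N := by omega
  have h2A : N < 2*A := by omega
  have hNr : (0:ℝ) < N := by exact_mod_cast hN0
  have hAr : (0:ℝ) < A := by exact_mod_cast hA1
  have h2Ar : (N:ℝ) + 1 ≤ 2*(A:ℝ) := by exact_mod_cast h2A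
  set c : ℝ := ((N:ℕ):ℝ)^2 / (2*(A:ℝ)) with hc
  set Δ : ℝ := 100 * Real.sqrt (r * (N:ℝ)) with hD
  have hcard_pos : (0:ℝ) < ((Om N A).card : ℝ) := by
    rw [card_Om A hAN]
    exact_mod_cast Nat.choose_pos hAN
  rw [div_le_iff₀ hcard_pos]
  have hc_pos : 0 < c := div_pos (pow_pos hNr 2) (by linarith)
  have hc_lt : c < N := by
    rw [hc, div_lt_iff₀ (by linarith)]
    nlinarith
  have hN1 : (1:ℝ) ≤ (N:ℝ) := by exact_mod_cast hN0
  have hsq1 : 1 ≤ Real.sqrt (r * (N:ℝ)) := by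
    rw [show (1:ℝ) = Real.sqrt 1 by simp]
    apply Real.sqrt_le_sqrt
    nlinarith
  have hΔ100 : 100 ≤ Δ := by rw [hD]; nlinarith
  have hΔ_pos : 0 < Δ := by linarith
  rcases le_or_gt (N:ℝ) Δ with hbig | hsmall
  · -- Δ ≥ N : the event is empty
    have hempty : ((Om N A).filter fun X =>
        Δ < |((sInf {k : ℕ | N / 2 + 1 ≤ cntLT N k X} : ℕ) : ℝ) - c|) = ∅ := by
      apply Finset.filter_false_of_mem
      intro X hX
      have hM := M_le A hAN h2A X hX
      have hMr : ((sInf {k : ℕ | N / 2 + 1 ≤ cntLT N k X} : ℕ) : ℝ) ≤ N := by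
        exact_mod_cast hM
      have hM0 : (0:ℝ) ≤ ((sInf {k : ℕ | N / 2 + 1 ≤ cntLT N k X} : ℕ) : ℝ) :=
        Nat.cast_nonneg _
      rw [not_lt, abs_le]
      constructor <;> linarith
    rw [hempty]
    simp only [Finset.card_empty, Nat.cast_zero]
    positivity
  · -- main case
    set k₁ : ℕ := ⌊c + Δ⌋₊ with hk₁def
    set k₀ : ℕ := ⌊c - Δ⌋₊ with hk₀def
    set E₁ := (Om N A).filter (fun X => cntLT N k₁ X ≤ N/2) with hE₁def
    set E₂ := (Om N A).filter (fun X => N/2 + 1 ≤ cntLT N k₀ X) with hE₂def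
    have hincl : ((Om N A).filter fun X =>
        Δ < |((sInf {k : ℕ | N / 2 + 1 ≤ cntLT N k X} : ℕ) : ℝ) - c|) ⊆ E₁ ∪ E₂ := by
      intro X hX
      simp only [Finset.mem_filter] at hX
      obtain ⟨hXOm, habs⟩ := hX
      rw [Finset.mem_union]
      rcases lt_abs.1 habs with hpos | hneg
      · left
        have h1 : (k₁:ℝ) ≤ c + Δ := Nat.floor_le (by linarith)
        have hk₁M : k₁ < sInf {k : ℕ | N / 2 + 1 ≤ cntLT N k X} := by
          have : (k₁:ℝ) < ((sInf {k : ℕ | N / 2 + 1 ≤ cntLT N k X} : ℕ) : ℝ) := by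
            linarith
          exact_mod_cast this
        rw [hE₁def, Finset.mem_filter]
        refine ⟨hXOm, ?_⟩
        by_contra hcon
        push_neg at hcon
        have : sInf {k : ℕ | N / 2 + 1 ≤ cntLT N k X} ≤ k₁ :=
          Nat.sInf_le (by simp only [Set.mem_setOf_eq]; omega)
        omega
      · right
        have hMk₀ : sInf {k : ℕ | N / 2 + 1 ≤ cntLT N k X} ≤ k₀ :=
          Nat.le_floor (by linarith)
        have hmem := M_mem A hAN h2A X hXOm
        simp only [Set.mem_setOf_eq] at hmem
        rw [hE₂def, Finset.mem_filter]
        exact ⟨hXOm, le_trans hmem (cntLT_mono _ _ hMk₀ X)⟩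
    set K : ℝ := (32*(N:ℝ)/(Δ/4)^2) * Real.exp (-((Δ/4)^2/(16*(N:ℝ)))) with hK
    have hΔ'16 : 16 ≤ Δ/4 := by linarith
    have hΔ'N : Δ/4 ≤ (N:ℝ) := by linarith
    have hfl_le : ((N/2 : ℕ):ℝ) ≤ (N:ℝ)/2 := by
      have h := Nat.cast_div_le (α := ℝ) (m := N) (n := 2)
      simpa using h
    have hfl_ge : (N:ℝ)/2 - 1/2 ≤ ((N/2 : ℕ):ℝ) := by
      have h : N ≤ 2*(N/2) + 1 := by omega
      have : (N:ℝ) ≤ 2*((N/2 : ℕ):ℝ) + 1 := by exact_mod_cast h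
      linarith
    have hE₁bound : (E₁.card : ℝ) ≤ K * ((Om N A).card : ℝ) := by
      rcases le_or_gt N k₁ with hk₁N | hk₁N
      · have : E₁ = ∅ := by
          rw [hE₁def]
          apply Finset.filter_false_of_mem
          intro X hX
          have h1 : cntLT N N X ≤ cntLT N k₁ X := cntLT_mono _ _ hk₁N X
          rw [cntLT_top] at h1
          have h2 : cnt N X = A := by simpa [Om] using hX
          omega
        rw [this]
        simp only [Finset.card_empty, Nat.cast_zero]
        have hK0 : 0 ≤ K := by
          rw [hK]; positivity
        exact mul_nonneg hK0 hcard_pos.le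
      · rw [hE₁def, hK]
        apply count_tail A k₁ (N/2) hk₁N.le hAN hN0 (Δ/4) hΔ'16 hΔ'N
        -- mean bound
        have hk₁c : c + Δ - 1 < (k₁:ℝ) := by
          have := Nat.sub_one_lt_floor (c + Δ)
          rw [← hk₁def] at this
          linarith
        rw [le_div_iff₀ hNr]
        have h1 : (c + Δ - 1) * A ≤ (k₁:ℝ)*A :=
          mul_le_mul_of_nonneg_right hk₁c.le hAr.le
        have hcA : c * A = (N:ℝ)^2/2 := by rw [hc]; field_simp
        nlinarith [mul_nonneg (by linarith : (0:ℝ) ≤ Δ - 4) (by linarith : (0:ℝ) ≤ (N:ℝ)),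
          mul_nonneg (by linarith : (0:ℝ) ≤ Δ - 1) (by linarith : (0:ℝ) ≤ 2*(A:ℝ) - (N:ℝ) - 1)]
    have hk₀N : k₀ ≤ N := by
      rcases le_or_gt 0 (c - Δ) with hge | hlt
      · have h1 : (k₀:ℝ) ≤ c - Δ := Nat.floor_le hge
        have : (k₀:ℝ) ≤ (N:ℝ) := by linarith
        exact_mod_cast this
      · have : k₀ = 0 := by
          rw [hk₀def, Nat.floor_eq_zero]
          rcases le_or_gt (c - Δ) 0 with h | h
          · linarith
          · linarith
        omega
    have hcA' : N/2 + 1 ≤ A := by omega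
    have hE₂bound : (E₂.card : ℝ) ≤ K * ((Om N A).card : ℝ) := by
      rw [hE₂def]
      have hrev := count_rev A k₀ (N/2+1) hk₀N hcA'
      rw [show ((Om N A).filter fun X => N/2 + 1 ≤ cntLT N k₀ X).card
          = ((Om N A).filter fun X => cntLT N (N - k₀) X ≤ A - (N/2+1)).card from hrev]
      rw [hK]
      apply count_tail A (N-k₀) (A - (N/2+1)) (Nat.sub_le N k₀) hAN hN0 (Δ/4) hΔ'16 hΔ'N
      -- mean bound for reversed tail
      have hcast1 : ((A - (N/2+1) : ℕ):ℝ) = (A:ℝ) - ((N/2:ℕ):ℝ) - 1 := by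
        rw [Nat.cast_sub hcA']
        push_cast
        ring
      have hcast2 : ((N - k₀ : ℕ):ℝ) = (N:ℝ) - (k₀:ℝ) := by
        rw [Nat.cast_sub hk₀N]
      rw [hcast1, hcast2, le_div_iff₀ hNr]
      rcases le_or_gt 0 (c - Δ) with hge | hlt
      · have h1 : (k₀:ℝ) ≤ c - Δ := Nat.floor_le hge
        have h2 : (k₀:ℝ) * A ≤ (c - Δ) * A := mul_le_mul_of_nonneg_right h1 hAr.le
        have hcA : c * A = (N:ℝ)^2/2 := by rw [hc]; field_simp
        nlinarith [mul_nonneg (by linarith : (0:ℝ) ≤ Δ) (by linarith : (0:ℝ) ≤ 2*(A:ℝ) - (N:ℝ) - 1)]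
      · have hk₀0 : k₀ = 0 := by
          rw [hk₀def, Nat.floor_eq_zero]
          rcases le_or_gt (c - Δ) 0 with h | h
          · linarith
          · linarith
        rw [hk₀0]
        simp only [Nat.cast_zero]
        nlinarith
    -- combine
    have hunion : (((Om N A).filter fun X =>
        Δ < |((sInf {k : ℕ | N / 2 + 1 ≤ cntLT N k X} : ℕ) : ℝ) - c|).card : ℝ)
        ≤ (E₁.card : ℝ) + (E₂.card : ℝ) := by
      have h1 := Finset.card_le_card hincl
      have h2 := Finset.card_union_le E₁ E₂
      have : (((Om N A).filter fun X =>
          Δ < |((sInf {k : ℕ | N / 2 + 1 ≤ cntLT N k X} : ℕ) : ℝ) - c|).card : ℕ)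
          ≤ E₁.card + E₂.card := le_trans h1 h2
      exact_mod_cast this
    have hKfinal : 2*K ≤ (2:ℝ)^(-r) := by
      have hsq : Real.sqrt (r * (N:ℝ)) ^ 2 = r * N :=
        Real.sq_sqrt (by nlinarith)
      have e1 : (Δ/4)^2 = 625*(r*(N:ℝ)) := by
        rw [hD]
        nlinarith [hsq]
      have e2 : 32*(N:ℝ)/(Δ/4)^2 = 32/(625*r) := by
        rw [e1]
        field_simp
      have e3 : (Δ/4)^2/(16*(N:ℝ)) = 625*r/16 := by
        rw [e1]
        field_simp
      have hrpow : (2:ℝ)^(-r) = Real.exp (Real.log 2 * (-r)) := by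
        rw [Real.rpow_def_of_pos (by norm_num)]
      rw [hK, e2, e3, hrpow]
      have hexp_le : Real.exp (-(625*r/16)) ≤ Real.exp (Real.log 2 * (-r)) := by
        apply Real.exp_le_exp.2
        have hlog := Real.log_two_lt_d9
        nlinarith
      have hcoef : 2*(32/(625*r)) ≤ 1 := by
        rw [show (2:ℝ)*(32/(625*r)) = 64/(625*r) by ring,
          div_le_one (by positivity : (0:ℝ) < 625*r)]
        nlinarith
      nlinarith [Real.exp_pos (-(625*r/16)), hexp_le,
        mul_le_mul_of_nonneg_right hcoef (Real.exp_pos (-(625*r/16))).le]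
    calc (((Om N A).filter fun X =>
        Δ < |((sInf {k : ℕ | N / 2 + 1 ≤ cntLT N k X} : ℕ) : ℝ) - c|).card : ℝ)
        ≤ (E₁.card : ℝ) + (E₂.card : ℝ) := hunion
      _ ≤ 2*K * ((Om N A).card : ℝ) := by linarith [hE₁bound, hE₂bound]
      _ ≤ (2:ℝ)^(-r) * ((Om N A).card : ℝ) :=
          mul_le_mul_of_nonneg_right hKfinal hcard_pos.le
end
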